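/- arXiv:2404.02021 — 2 statements merged into one kernel-verified Lean document; each statement's English description precedes it below -/
import Mathlib

section
/- For every nonempty 3-graph H with m_pair(H) > 1/3, there exist a constant c > 0 and an integer n_0 (both depending only on H) such that for all n ≥ n_0, the Ramsey number satisfies r(H, K_{n,n,n}^(3)) ≥ 2^{c n}. -/
/-- A 3-uniform hypergraph on a finite subset of `ℕ`. -/
structure ThreeGraph where
  verts : Finset ℕ
  edges : Finset (Finset ℕ)
  card_eq : ∀ e ∈ edges, e.card = 3
  subset_verts : ∀ e ∈ edges, e ⊆ verts

/-- `χ` (on 3-element subsets of `{0, …, N-1}`) contains a copy of `H` in color `c`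
(`true` = red, `false` = blue). -/
def hasMonoCopy (N : ℕ) (χ : Finset ℕ → Bool) (H : ThreeGraph) (c : Bool) : Prop :=
  ∃ φ : ℕ → ℕ, Set.InjOn φ ↑H.verts ∧ (∀ v ∈ H.verts, φ v < N) ∧
    ∀ e ∈ H.edges, χ (e.image φ) = c

/-- The Ramsey number `r(G, H)`: the least `N` such that every red/blue coloring of the
triples of an `N`-element set contains a red copy of `G` or a blue copy of `H`. -/
noncomputable def ramsey (G H : ThreeGraph) : ℕ :=
  sInf {N : ℕ | ∀ χ : Finset ℕ → Bool,
    hasMonoCopy N χ G true ∨ hasMonoCopy N χ H false}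

/-- The complete tripartite 3-graph `K_{a,b,c}^{(3)}`. -/
def tripartite (a b c : ℕ) : ThreeGraph where
  verts := Finset.range (a + b + c)
  edges := ((Finset.range (a + b + c)).powersetCard 3).filter (fun e =>
    (e.filter (fun x => x < a)).card = 1 ∧
    (e.filter (fun x => a ≤ x ∧ x < a + b)).card = 1 ∧
    (e.filter (fun x => a + b ≤ x)).card = 1)
  card_eq := fun e he => (Finset.mem_powersetCard.mp (Finset.mem_filter.mp he).1).2
  subset_verts := fun e he => (Finset.mem_powersetCard.mp (Finset.mem_filter.mp he).1).1

/-- The complete 3-graph `K_n^{(3)}`. -/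
def completeTG (n : ℕ) : ThreeGraph where
  verts := Finset.range n
  edges := (Finset.range n).powersetCard 3
  card_eq := fun e he => (Finset.mem_powersetCard.mp he).2
  subset_verts := fun e he => (Finset.mem_powersetCard.mp he).1

/-- The shadow of a set of 3-edges: all 2-element subsets of its edges. -/
def shadowOf (E : Finset (Finset ℕ)) : Finset (Finset ℕ) :=
  E.biUnion (fun e => e.powersetCard 2)

/-- An oriented 3-graph (given by its edge set of ordered triples): it contains at most one of
the six coordinate permutations of any ordered triple and no triple with a repeated
coordinate. -/
def Oriented (E : Set (ℕ × ℕ × ℕ)) : Prop :=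
  ∀ a b c : ℕ, (a, b, c) ∈ E →
    (a ≠ b ∧ b ≠ c ∧ a ≠ c) ∧
    (a, c, b) ∉ E ∧ (b, a, c) ∉ E ∧ (b, c, a) ∉ E ∧ (c, a, b) ∉ E ∧ (c, b, a) ∉ E

/-- `f` is a pair homomorphism from `H`, ordered by the (injective on `V(H)`) function `ord`,
to the oriented 3-graph with edge set `E`. -/
def IsPairHom (H : ThreeGraph) (ord : ℕ → ℕ) (E : Set (ℕ × ℕ × ℕ))
    (f : Finset ℕ → ℕ) : Prop :=
  Set.InjOn ord ↑H.verts ∧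
  ∀ e ∈ H.edges, ∀ u v w : ℕ, e = {u, v, w} → ord u < ord v → ord v < ord w →
    (f {u, v} ≠ f {v, w} ∧ f {v, w} ≠ f {u, w} ∧ f {u, v} ≠ f {u, w}) ∧
    (f {u, v}, f {v, w}, f {u, w}) ∈ E

/-- `v(f(H'))` for the subhypergraph with edge set `E'`: the number of vertices of the image,
i.e. the size of the image of the shadow of `E'` under `f`. -/
def imageVerts (f : Finset ℕ → ℕ) (E' : Finset (Finset ℕ)) : ℕ :=
  ((shadowOf E').image f).card

/-- `e(f(H'))` for the subhypergraph with edge set `E'`: the number of distinct image triples. -/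
noncomputable def imageEdges (ord : ℕ → ℕ) (f : Finset ℕ → ℕ)
    (E' : Finset (Finset ℕ)) : ℕ :=
  Set.ncard {p : ℕ × ℕ × ℕ | ∃ e ∈ E', ∃ u v w : ℕ,
    e = ({u, v, w} : Finset ℕ) ∧ ord u < ord v ∧ ord v < ord w ∧
    p = (f {u, v}, f {v, w}, f {u, w})}

/-- The pair density `m_pair(H)`: the minimum, over all orderings of `V(H)` and all pair
homomorphisms `f` from `H` to any oriented 3-graph, of the maximum over all nonempty
subhypergraphs `H' ⊆ H` of `e(f(H')) / v(f(H'))`. -/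
noncomputable def mpair (H : ThreeGraph) : ℝ :=
  sInf {q : ℝ | ∃ (ord : ℕ → ℕ) (E : Set (ℕ × ℕ × ℕ)) (f : Finset ℕ → ℕ),
    Oriented E ∧ IsPairHom H ord E f ∧
    q = sSup {r : ℝ | ∃ E' : Finset (Finset ℕ), E' ⊆ H.edges ∧ E'.Nonempty ∧
      r = (imageEdges ord f E' : ℝ) / (imageVerts f E' : ℝ)}}

/-- The set of 3-edges `E` contains a Berge cycle: `t ≥ 2` distinct vertices and `t` distinct
edges with `v i, v (i+1) ∈ e i` cyclically. -/
def HasBergeCycle (E : Set (Finset ℕ)) : Prop :=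
  ∃ t : ℕ, 2 ≤ t ∧ ∃ (v : ZMod t → ℕ) (e : ZMod t → Finset ℕ),
    Function.Injective v ∧ Function.Injective e ∧
    ∀ i : ZMod t, e i ∈ E ∧ v i ∈ e i ∧ v (i + 1) ∈ e i

/-- `H` is avoidable: for every ordering and every pair homomorphism `f` from `H` to an
oriented 3-graph, the 3-graph of underlying vertex sets of the image edges has a Berge cycle. -/
def Avoidable (H : ThreeGraph) : Prop :=
  ∀ (ord : ℕ → ℕ) (E : Set (ℕ × ℕ × ℕ)) (f : Finset ℕ → ℕ),
    Oriented E → IsPairHom H ord E f →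
    HasBergeCycle {s : Finset ℕ | ∃ e ∈ H.edges, ∃ u v w : ℕ,
      e = ({u, v, w} : Finset ℕ) ∧ ord u < ord v ∧ ord v < ord w ∧
      s = ({f {u, v}, f {v, w}, f {u, w}} : Finset ℕ)}

/-- A linear 3-graph: any two distinct edges share at most one vertex. -/
def LinearTG (F : ThreeGraph) : Prop :=
  ∀ e₁ ∈ F.edges, ∀ e₂ ∈ F.edges, e₁ ≠ e₂ → (e₁ ∩ e₂).card ≤ 1

/-- two sorted triples with equal underlying sets are equal -/
lemma triple_eq {x y z a b c : ℕ} (h1 : x < y) (h2 : y < z) (h3 : a < b) (h4 : b < c)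
    (h : ({x, y, z} : Finset ℕ) = {a, b, c}) : x = a ∧ y = b ∧ z = c := by
  have hx : x = a ∨ x = b ∨ x = c := by
    have : x ∈ ({a,b,c} : Finset ℕ) := h ▸ by simp
    simpa using this
  have hy : y = a ∨ y = b ∨ y = c := by
    have : y ∈ ({a,b,c} : Finset ℕ) := h ▸ by simp
    simpa using this
  have hz : z = a ∨ z = b ∨ z = c := by
    have : z ∈ ({a,b,c} : Finset ℕ) := h ▸ by simp
    simpa using this
  have ha : a = x ∨ a = y ∨ a = z := by
    have : a ∈ ({x,y,z} : Finset ℕ) := by rw [h]; simp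
    simpa using this
  have hc : c = x ∨ c = y ∨ c = z := by
    have : c ∈ ({x,y,z} : Finset ℕ) := by rw [h]; simp
    simpa using this
  omega

/-- a 2-subset of a 3-set is one of the three pairs -/
lemma pair_sub_triple {u v w : ℕ} (p : Finset ℕ) (huv : u ≠ v) (hvw : v ≠ w) (huw : u ≠ w)
    (hp : p ⊆ {u, v, w}) (hc : p.card = 2) :
    p = {u, v} ∨ p = {v, w} ∨ p = {u, w} := by
  obtain ⟨s, t, hst, rfl⟩ := Finset.card_eq_two.mp hc
  have hs : s = u ∨ s = v ∨ s = w := by simpa using hp (by simp : s ∈ ({s,t} : Finset ℕ))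
  have ht : t = u ∨ t = v ∨ t = w := by simpa using hp (by simp : t ∈ ({s,t} : Finset ℕ))
  rcases hs with rfl|rfl|rfl <;> rcases ht with rfl|rfl|rfl <;>
    first
      | exact absurd rfl hst
      | (left; rfl)
      | (left; exact Finset.pair_comm _ _)
      | (right; left; rfl)
      | (right; left; exact Finset.pair_comm _ _)
      | (right; right; rfl)
      | (right; right; exact Finset.pair_comm _ _)

/-- decompose a 3-set in increasing φ-order -/
lemma exists_sorted_decomp {e : Finset ℕ} {φ : ℕ → ℕ} (hcard : e.card = 3)
    (hinj : Set.InjOn φ ↑e) :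
    ∃ u v w, e = {u, v, w} ∧ φ u < φ v ∧ φ v < φ w := by
  obtain ⟨a, b, c, hab, hac, hbc, rfl⟩ := Finset.card_eq_three.mp hcard
  have ma : a ∈ ({a,b,c} : Finset ℕ) := by simp
  have mb : b ∈ ({a,b,c} : Finset ℕ) := by simp
  have mc : c ∈ ({a,b,c} : Finset ℕ) := by simp
  have fab : φ a ≠ φ b := fun h => hab (hinj ma mb h)
  have fac : φ a ≠ φ c := fun h => hac (hinj ma mc h)
  have fbc : φ b ≠ φ c := fun h => hbc (hinj mb mc h)
  have perm : ∀ x y z : ℕ, ({a,b,c} : Finset ℕ) = {x,y,z} ∨ ¬ ({a,b,c} : Finset ℕ) = {x,y,z} := fun _ _ _ => em _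
  rcases lt_trichotomy (φ a) (φ b) with h1 | h1 | h1
  · rcases lt_trichotomy (φ b) (φ c) with h2 | h2 | h2
    · exact ⟨a, b, c, rfl, h1, h2⟩
    · exact absurd h2 fbc
    · rcases lt_trichotomy (φ a) (φ c) with h3 | h3 | h3
      · exact ⟨a, c, b, by ext x; simp; tauto, h3, h2⟩
      · exact absurd h3 fac
      · exact ⟨c, a, b, by ext x; simp; tauto, h3, h1⟩
  · exact absurd h1 fab
  · rcases lt_trichotomy (φ a) (φ c) with h2 | h2 | h2
    · exact ⟨b, a, c, by ext x; simp; tauto, h1, h2⟩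
    · exact absurd h2 fac
    · rcases lt_trichotomy (φ b) (φ c) with h3 | h3 | h3
      · exact ⟨b, c, a, by ext x; simp; tauto, h3, h2⟩
      · exact absurd h3 fbc
      · exact ⟨c, b, a, by ext x; simp; tauto, h3, h1⟩


def pcode (N x y : ℕ) : ℕ := N * min x y + max x y

lemma pcode_lt {N x y : ℕ} (hx : x < N) (hy : y < N) : pcode N x y < N * N := by
  have h1 : min x y < N := lt_of_le_of_lt (min_le_left _ _) hx
  have h2 : max x y < N := max_lt hx hy
  calc N * min x y + max x y < N * min x y + N := by omega
    _ = N * (min x y + 1) := by ring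
    _ ≤ N * N := Nat.mul_le_mul_left N h1

lemma pcode_inj {N x y x' y' : ℕ} (hxy : x < y) (hxy' : x' < y') (hy : y < N) (hy' : y' < N)
    (h : pcode N x y = pcode N x' y') : x = x' ∧ y = y' := by
  have e1 : pcode N x y = N * x + y := by
    rw [pcode, min_eq_left hxy.le, max_eq_right hxy.le]
  have e2 : pcode N x' y' = N * x' + y' := by
    rw [pcode, min_eq_left hxy'.le, max_eq_right hxy'.le]
  rw [e1, e2] at h
  have hN : 0 < N := lt_of_le_of_lt (Nat.zero_le _) hy
  have d1 : (N * x + y) / N = x := by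
    rw [Nat.mul_add_div hN, Nat.div_eq_of_lt hy, Nat.add_zero]
  have d2 : (N * x' + y') / N = x' := by
    rw [Nat.mul_add_div hN, Nat.div_eq_of_lt hy', Nat.add_zero]
  have m1 : (N * x + y) % N = y := by rw [Nat.mul_add_mod, Nat.mod_eq_of_lt hy]
  have m2 : (N * x' + y') % N = y' := by rw [Nat.mul_add_mod, Nat.mod_eq_of_lt hy']
  constructor
  · rw [← d1, ← d2, h]
  · rw [← m1, ← m2, h]

lemma mod_cancel_left {n i i' j : ℕ} (hi : i < n) (hi' : i' < n)
    (h : (i + j) % n = (i' + j) % n) : i = i' := by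
  have : i % n = i' % n := Nat.ModEq.add_right_cancel' j h
  rwa [Nat.mod_eq_of_lt hi, Nat.mod_eq_of_lt hi'] at this

lemma mod_cancel_right {n i j j' : ℕ} (hj : j < n) (hj' : j' < n)
    (h : (i + j) % n = (i + j') % n) : j = j' := by
  have : j % n = j' % n := Nat.ModEq.add_left_cancel' i h
  rwa [Nat.mod_eq_of_lt hj, Nat.mod_eq_of_lt hj'] at this

def sort3 (a b c : ℕ) : ℕ × ℕ × ℕ :=
  if a < b then (if b < c then (a, b, c) else if a < c then (a, c, b) else (c, a, b))
  else (if a < c then (b, a, c) else if b < c then (b, c, a) else (c, b, a))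

lemma sort3_spec {a b c : ℕ} (hab : a ≠ b) (hbc : b ≠ c) (hac : a ≠ c) :
    (sort3 a b c).1 < (sort3 a b c).2.1 ∧ (sort3 a b c).2.1 < (sort3 a b c).2.2 ∧
    ({a, b, c} : Finset ℕ) = {(sort3 a b c).1, (sort3 a b c).2.1, (sort3 a b c).2.2} := by
  unfold sort3
  split_ifs <;> dsimp only <;> refine ⟨by omega, by omega, by ext x; simp; try tauto⟩

----------------------------------------------------------------
-- the coloring

/-- code of a pair given as a 2-element finset -/
def scode (N : ℕ) (S : Finset ℕ) : ℕ :=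
  N * (S.sum id - S.sup id) + S.sup id

lemma scode_pair {N x y : ℕ} (h : x ≠ y) : scode N {x, y} = pcode N x y := by
  have hsum : ({x, y} : Finset ℕ).sum id = x + y := Finset.sum_pair h
  have hsup : ({x, y} : Finset ℕ).sup id = max x y := by
    simp [Finset.sup_insert, Finset.sup_singleton]
  have h1 : min x y + max x y = x + y := min_add_max x y
  have h2 : x + y - max x y = min x y := by omega
  simp only [scode, pcode, hsum, hsup, h2]

/-- the red condition on a 3-element set -/
def RedProp (N : ℕ) (g : ℕ → Fin 3) (S : Finset ℕ) : Prop :=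
  ∃ x y z : ℕ, x < y ∧ y < z ∧ S = {x, y, z} ∧
    g (pcode N x y) = 0 ∧ g (pcode N y z) = 1 ∧ g (pcode N x z) = 2

open Classical in
/-- the coloring determined by a pair-coloring `g` -/
noncomputable def chi (N : ℕ) (g : ℕ → Fin 3) (S : Finset ℕ) : Bool :=
  if RedProp N g S then true else false

lemma chi_true_iff {N g S} : chi N g S = true ↔ RedProp N g S := by
  simp [chi]

lemma chi_false_iff {N g S} : chi N g S = false ↔ ¬ RedProp N g S := by
  simp [chi]

----------------------------------------------------------------
-- Component 2 : no red copy of H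

theorem no_red (H : ThreeGraph) (hne : H.edges.Nonempty) (hm : mpair H > 1 / 3)
    (N : ℕ) (g : ℕ → Fin 3) : ¬ hasMonoCopy N (chi N g) H true := by
  rintro ⟨φ, hinj, -, hred⟩
  -- the pair homomorphism
  set f : Finset ℕ → ℕ := fun p => (g (scode N (p.image φ)) : ℕ) with hf
  set E : Set (ℕ × ℕ × ℕ) := {((0 : ℕ), (1 : ℕ), (2 : ℕ))} with hE
  -- key: for each edge decomposition in φ-increasing order, f gives 0,1,2
  have key : ∀ e ∈ H.edges, ∀ u v w : ℕ, e = {u, v, w} → φ u < φ v → φ v < φ w →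
      f {u, v} = 0 ∧ f {v, w} = 1 ∧ f {u, w} = 2 := by
    intro e he u v w hdec h1 h2
    have him : e.image φ = {φ u, φ v, φ w} := by
      subst hdec; simp [Finset.image_insert]
    have hr : RedProp N g (e.image φ) := chi_true_iff.mp (hred e he)
    obtain ⟨x, y, z, hxy, hyz, hS, g1, g2, g3⟩ := hr
    rw [him] at hS
    obtain ⟨ex, ey, ez⟩ := triple_eq h1 h2 hxy hyz hS
    have p1 : ({u, v} : Finset ℕ).image φ = {φ u, φ v} := by simp [Finset.image_insert]
    have p2 : ({v, w} : Finset ℕ).image φ = {φ v, φ w} := by simp [Finset.image_insert]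
    have p3 : ({u, w} : Finset ℕ).image φ = {φ u, φ w} := by simp [Finset.image_insert]
    refine ⟨?_, ?_, ?_⟩
    · rw [hf]; simp only [p1, scode_pair (Nat.ne_of_lt h1)]
      rw [← ex, ← ey] at g1; rw [g1]; rfl
    · rw [hf]; simp only [p2, scode_pair (Nat.ne_of_lt h2)]
      rw [← ey, ← ez] at g2; rw [g2]; rfl
    · rw [hf]; simp only [p3, scode_pair (Nat.ne_of_lt (h1.trans h2))]
      rw [← ex, ← ez] at g3; rw [g3]; rfl
  have horiented : Oriented E := by
    intro a b c habc
    simp only [hE, Set.mem_singleton_iff, Prod.mk.injEq] at habc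
    obtain ⟨rfl, rfl, rfl⟩ := habc
    refine ⟨⟨by norm_num, by norm_num, by norm_num⟩, ?_, ?_, ?_, ?_, ?_⟩ <;>
      simp [hE, Prod.ext_iff]
  have hhom : IsPairHom H φ E f := by
    refine ⟨hinj, ?_⟩
    intro e he u v w hdec h1 h2
    obtain ⟨k1, k2, k3⟩ := key e he u v w hdec h1 h2
    rw [k1, k2, k3]
    exact ⟨⟨by norm_num, by norm_num, by norm_num⟩, rfl⟩
  -- all ratios are 1/3
  have hratio : ∀ E' : Finset (Finset ℕ), E' ⊆ H.edges → E'.Nonempty →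
      imageEdges φ f E' = 1 ∧ imageVerts f E' = 3 := by
    intro E' hsub hne'
    obtain ⟨e₀, he₀⟩ := hne'
    have he₀H := hsub he₀
    have hinj₀ : Set.InjOn φ ↑e₀ := hinj.mono (by exact_mod_cast H.subset_verts e₀ he₀H)
    obtain ⟨u₀, v₀, w₀, hdec₀, h1₀, h2₀⟩ :=
      exists_sorted_decomp (H.card_eq e₀ he₀H) hinj₀
    obtain ⟨q1, q2, q3⟩ := key e₀ he₀H u₀ v₀ w₀ hdec₀ h1₀ h2₀
    constructor
    · -- imageEdges = 1
      have : {p : ℕ × ℕ × ℕ | ∃ e ∈ E', ∃ u v w : ℕ,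
          e = ({u, v, w} : Finset ℕ) ∧ φ u < φ v ∧ φ v < φ w ∧
          p = (f {u, v}, f {v, w}, f {u, w})} = {((0 : ℕ), (1 : ℕ), (2 : ℕ))} := by
        apply Set.eq_singleton_iff_unique_mem.mpr
        constructor
        · exact ⟨e₀, he₀, u₀, v₀, w₀, hdec₀, h1₀, h2₀, by rw [q1, q2, q3]⟩
        · rintro p ⟨e, he, u, v, w, hdec, h1, h2, rfl⟩
          obtain ⟨k1, k2, k3⟩ := key e (hsub he) u v w hdec h1 h2
          rw [k1, k2, k3]
      rw [imageEdges, this, Set.ncard_singleton]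
    · -- imageVerts = 3
      have him : (shadowOf E').image f = ({0, 1, 2} : Finset ℕ) := by
        apply Finset.Subset.antisymm
        · intro t ht
          obtain ⟨p, hp, rfl⟩ := Finset.mem_image.mp ht
          obtain ⟨e, he, hpe⟩ := Finset.mem_biUnion.mp hp
          rw [Finset.mem_powersetCard] at hpe
          have heH := hsub he
          have hinj' : Set.InjOn φ ↑e := hinj.mono (by exact_mod_cast H.subset_verts e heH)
          obtain ⟨u, v, w, hdec, h1, h2⟩ := exists_sorted_decomp (H.card_eq e heH) hinj'
          obtain ⟨k1, k2, k3⟩ := key e heH u v w hdec h1 h2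
          have huv : u ≠ v := by
            intro h; rw [h] at h1; exact lt_irrefl _ h1
          have hvw : v ≠ w := by
            intro h; rw [h] at h2; exact lt_irrefl _ h2
          have huw : u ≠ w := by
            intro h; rw [h] at h1; exact absurd (h1.trans h2) (lt_irrefl _)
          rcases pair_sub_triple p huv hvw huw (hdec ▸ hpe.1) hpe.2 with rfl | rfl | rfl
          · rw [k1]; simp
          · rw [k2]; simp
          · rw [k3]; simp
        · intro t ht
          simp only [Finset.mem_insert, Finset.mem_singleton] at ht
          have hmemSh : ∀ p : Finset ℕ, p ⊆ e₀ → p.card = 2 → p ∈ shadowOf E' := by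
            intro p hp1 hp2
            exact Finset.mem_biUnion.mpr ⟨e₀, he₀, Finset.mem_powersetCard.mpr ⟨hp1, hp2⟩⟩
          have huv : u₀ ≠ v₀ := by intro h; rw [h] at h1₀; exact lt_irrefl _ h1₀
          have hvw : v₀ ≠ w₀ := by intro h; rw [h] at h2₀; exact lt_irrefl _ h2₀
          have huw : u₀ ≠ w₀ := by
            intro h; rw [h] at h1₀; exact lt_irrefl _ (h1₀.trans h2₀)
          have s1 : ({u₀, v₀} : Finset ℕ) ⊆ e₀ := by rw [hdec₀]; intro x hx; simp at hx; simp; tauto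
          have s2 : ({v₀, w₀} : Finset ℕ) ⊆ e₀ := by rw [hdec₀]; intro x hx; simp at hx; simp; tauto
          have s3 : ({u₀, w₀} : Finset ℕ) ⊆ e₀ := by rw [hdec₀]; intro x hx; simp at hx; simp; tauto
          rcases ht with rfl | rfl | rfl
          · exact Finset.mem_image.mpr ⟨{u₀, v₀}, hmemSh _ s1 (Finset.card_pair huv), q1⟩
          · exact Finset.mem_image.mpr ⟨{v₀, w₀}, hmemSh _ s2 (Finset.card_pair hvw), q2⟩
          · exact Finset.mem_image.mpr ⟨{u₀, w₀}, hmemSh _ s3 (Finset.card_pair huw), q3⟩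
      rw [imageVerts, him]
      decide
  -- the ratio set is {1/3}
  have hR : {r : ℝ | ∃ E' : Finset (Finset ℕ), E' ⊆ H.edges ∧ E'.Nonempty ∧
      r = (imageEdges φ f E' : ℝ) / (imageVerts f E' : ℝ)} = {(1 : ℝ)/3} := by
    ext r
    simp only [Set.mem_setOf_eq, Set.mem_singleton_iff]
    constructor
    · rintro ⟨E', hs, hne', rfl⟩
      obtain ⟨h1, h2⟩ := hratio E' hs hne'
      rw [h1, h2]; norm_num
    · rintro rfl
      refine ⟨H.edges, Finset.Subset.refl _, hne, ?_⟩
      obtain ⟨h1, h2⟩ := hratio H.edges (Finset.Subset.refl _) hne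
      rw [h1, h2]; norm_num
  have hmem : (1/3 : ℝ) ∈ {q : ℝ | ∃ (ord : ℕ → ℕ) (E : Set (ℕ × ℕ × ℕ)) (f : Finset ℕ → ℕ),
      Oriented E ∧ IsPairHom H ord E f ∧
      q = sSup {r : ℝ | ∃ E' : Finset (Finset ℕ), E' ⊆ H.edges ∧ E'.Nonempty ∧
        r = (imageEdges ord f E' : ℝ) / (imageVerts f E' : ℝ)}} := by
    exact ⟨φ, E, f, horiented, hhom, by rw [hR, csSup_singleton]⟩
  have hbdd : BddBelow {q : ℝ | ∃ (ord : ℕ → ℕ) (E : Set (ℕ × ℕ × ℕ)) (f : Finset ℕ → ℕ),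
      Oriented E ∧ IsPairHom H ord E f ∧
      q = sSup {r : ℝ | ∃ E' : Finset (Finset ℕ), E' ⊆ H.edges ∧ E'.Nonempty ∧
        r = (imageEdges ord f E' : ℝ) / (imageVerts f E' : ℝ)}} := by
    refine ⟨0, ?_⟩
    rintro q ⟨ord', E'', f', hOr, hPH, rfl⟩
    have hfin : {r : ℝ | ∃ E' : Finset (Finset ℕ), E' ⊆ H.edges ∧ E'.Nonempty ∧
        r = (imageEdges ord' f' E' : ℝ) / (imageVerts f' E' : ℝ)}.Finite := by
      apply Set.Finite.subset (((H.edges.powerset.finite_toSet).image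
        (fun E' => (imageEdges ord' f' E' : ℝ) / (imageVerts f' E' : ℝ))))
      rintro r ⟨E', hs, -, rfl⟩
      exact ⟨E', by simpa [Finset.mem_powerset] using hs, rfl⟩
    have hmem0 : (imageEdges ord' f' H.edges : ℝ) / (imageVerts f' H.edges : ℝ) ∈
        {r : ℝ | ∃ E' : Finset (Finset ℕ), E' ⊆ H.edges ∧ E'.Nonempty ∧
        r = (imageEdges ord' f' E' : ℝ) / (imageVerts f' E' : ℝ)} :=
      ⟨H.edges, Finset.Subset.refl _, hne, rfl⟩
    refine le_trans (div_nonneg (Nat.cast_nonneg _) (Nat.cast_nonneg _))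
      (le_csSup hfin.bddAbove hmem0)
  have : mpair H ≤ 1/3 := csInf_le hbdd hmem
  linarith

/-- extension of a finitely-supported pair coloring -/
def extg (N : ℕ) (g : Fin (N * N) → Fin 3) : ℕ → Fin 3 :=
  fun m => if h : m < N * N then g ⟨m, h⟩ else 0

def wv (n N : ℕ) (ψ : Fin (n + n + n) → Fin N) (m : ℕ) : ℕ :=
  if h : m < n + n + n then (ψ ⟨m, h⟩ : ℕ) else 0

def idx0 (n : ℕ) (q : Fin n × Fin n) : ℕ := q.1.val
def idx1 (n : ℕ) (q : Fin n × Fin n) : ℕ := n + q.2.val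
def idx2 (n : ℕ) (q : Fin n × Fin n) : ℕ := n + n + ((q.1.val + q.2.val) % n)

def AllBlue (n N : ℕ) (g : ℕ → Fin 3) (ψ : Fin (n + n + n) → Fin N) : Prop :=
  ∀ q : Fin n × Fin n,
    ¬ RedProp N g {wv n N ψ (idx0 n q), wv n N ψ (idx1 n q), wv n N ψ (idx2 n q)}

section counting

variable (n N : ℕ) (ψ : Fin (n + n + n) → Fin N)

def stX (q : Fin n × Fin n) : ℕ :=
  (sort3 (wv n N ψ (idx0 n q)) (wv n N ψ (idx1 n q)) (wv n N ψ (idx2 n q))).1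
def stY (q : Fin n × Fin n) : ℕ :=
  (sort3 (wv n N ψ (idx0 n q)) (wv n N ψ (idx1 n q)) (wv n N ψ (idx2 n q))).2.1
def stZ (q : Fin n × Fin n) : ℕ :=
  (sort3 (wv n N ψ (idx0 n q)) (wv n N ψ (idx1 n q)) (wv n N ψ (idx2 n q))).2.2

def dlo (q : Fin n × Fin n) : Fin 3 → ℕ
  | ⟨0, _⟩ => stX n N ψ q
  | ⟨1, _⟩ => stY n N ψ q
  | ⟨_ + 2, _⟩ => stX n N ψ q

def dhi (q : Fin n × Fin n) : Fin 3 → ℕ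
  | ⟨0, _⟩ => stY n N ψ q
  | ⟨1, _⟩ => stZ n N ψ q
  | ⟨_ + 2, _⟩ => stZ n N ψ q

def dcode (q : Fin n × Fin n) (s : Fin 3) : ℕ := pcode N (dlo n N ψ q s) (dhi n N ψ q s)

variable {n N ψ}

lemma count_bad (hn : 0 < n) (hN3 : n + n + n ≤ N) (hψ : Function.Injective ψ)
    (s : Finset (Fin (N * N) → Fin 3)) (hs : ∀ g' ∈ s, AllBlue n N (extg N g') ψ) :
    s.card ≤ 26 ^ (n * n) * 3 ^ (N * N - 3 * (n * n)) := by
  classical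
  have hN0 : 0 < N := by omega
  -- wv facts
  have hwv_lt : ∀ m, wv n N ψ m < N := by
    intro m; unfold wv; split
    · exact (ψ _).isLt
    · exact hN0
  have hwv_inj : ∀ m m', m < n + n + n → m' < n + n + n → wv n N ψ m = wv n N ψ m' → m = m' := by
    intro m m' hm hm' h
    unfold wv at h; rw [dif_pos hm, dif_pos hm'] at h
    have h2 : ψ ⟨m, hm⟩ = ψ ⟨m', hm'⟩ := Fin.ext h
    exact congrArg Fin.val (hψ h2)
  have hk : ∀ q : Fin n × Fin n, (q.1.val + q.2.val) % n < n := fun q => Nat.mod_lt _ hn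
  have hidx0 : ∀ q, idx0 n q < n + n + n := by intro q; have := q.1.isLt; unfold idx0; omega
  have hidx1 : ∀ q, idx1 n q < n + n + n := by intro q; have := q.2.isLt; unfold idx1; omega
  have hidx2 : ∀ q, idx2 n q < n + n + n := by intro q; have := hk q; unfold idx2; omega
  have hAB : ∀ q, wv n N ψ (idx0 n q) ≠ wv n N ψ (idx1 n q) := by
    intro q h
    have := hwv_inj _ _ (hidx0 q) (hidx1 q) h
    have h1 := q.1.isLt; unfold idx0 idx1 at this; omega
  have hBC : ∀ q, wv n N ψ (idx1 n q) ≠ wv n N ψ (idx2 n q) := by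
    intro q h
    have := hwv_inj _ _ (hidx1 q) (hidx2 q) h
    have h1 := q.2.isLt; unfold idx1 idx2 at this; omega
  have hAC : ∀ q, wv n N ψ (idx0 n q) ≠ wv n N ψ (idx2 n q) := by
    intro q h
    have := hwv_inj _ _ (hidx0 q) (hidx2 q) h
    have h1 := q.1.isLt; unfold idx0 idx2 at this; omega
  have hsort : ∀ q, stX n N ψ q < stY n N ψ q ∧ stY n N ψ q < stZ n N ψ q ∧
      ({wv n N ψ (idx0 n q), wv n N ψ (idx1 n q), wv n N ψ (idx2 n q)} : Finset ℕ) =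
        {stX n N ψ q, stY n N ψ q, stZ n N ψ q} :=
    fun q => sort3_spec (hAB q) (hBC q) (hAC q)
  have hmem : ∀ q, ∀ t ∈ [stX n N ψ q, stY n N ψ q, stZ n N ψ q],
      t = wv n N ψ (idx0 n q) ∨ t = wv n N ψ (idx1 n q) ∨ t = wv n N ψ (idx2 n q) := by
    intro q t ht
    have h := (hsort q).2.2
    have : t ∈ ({stX n N ψ q, stY n N ψ q, stZ n N ψ q} : Finset ℕ) := by
      simp only [List.mem_cons, List.not_mem_nil, or_false] at ht
      simp only [Finset.mem_insert, Finset.mem_singleton]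
      tauto
    rw [← h] at this
    simpa using this
  have hXmem := fun q => hmem q _ (by simp : stX n N ψ q ∈ _)
  have hYmem := fun q => hmem q _ (by simp : stY n N ψ q ∈ _)
  have hZmem := fun q => hmem q _ (by simp : stZ n N ψ q ∈ _)
  have hXN : ∀ q, stX n N ψ q < N := by
    intro q; rcases hXmem q with h|h|h <;> rw [h] <;> apply hwv_lt
  have hYN : ∀ q, stY n N ψ q < N := by
    intro q; rcases hYmem q with h|h|h <;> rw [h] <;> apply hwv_lt
  have hZN : ∀ q, stZ n N ψ q < N := by
    intro q; rcases hZmem q with h|h|h <;> rw [h] <;> apply hwv_lt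
  -- slot-level facts
  have hlohi : ∀ q (t : Fin 3), dlo n N ψ q t < dhi n N ψ q t := by
    rintro q ⟨tv, htv⟩
    interval_cases tv
    · exact (hsort q).1
    · exact (hsort q).2.1
    · exact (hsort q).1.trans (hsort q).2.1
  have hhiN : ∀ q (t : Fin 3), dhi n N ψ q t < N := by
    rintro q ⟨tv, htv⟩
    interval_cases tv
    · exact hYN q
    · exact hZN q
    · exact hZN q
  have hloN : ∀ q (t : Fin 3), dlo n N ψ q t < N := by
    rintro q ⟨tv, htv⟩
    interval_cases tv
    · exact hXN q
    · exact hYN q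
    · exact hXN q
  have hlomem : ∀ q (t : Fin 3), dlo n N ψ q t = wv n N ψ (idx0 n q) ∨
      dlo n N ψ q t = wv n N ψ (idx1 n q) ∨ dlo n N ψ q t = wv n N ψ (idx2 n q) := by
    rintro q ⟨tv, htv⟩
    interval_cases tv
    · exact hXmem q
    · exact hYmem q
    · exact hXmem q
  have hhimem : ∀ q (t : Fin 3), dhi n N ψ q t = wv n N ψ (idx0 n q) ∨
      dhi n N ψ q t = wv n N ψ (idx1 n q) ∨ dhi n N ψ q t = wv n N ψ (idx2 n q) := by
    rintro q ⟨tv, htv⟩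
    interval_cases tv
    · exact hYmem q
    · exact hZmem q
    · exact hZmem q
  -- q is determined by any two vertices of its triple
  have qdet : ∀ q q' (u v : ℕ), u ≠ v →
      (u = wv n N ψ (idx0 n q) ∨ u = wv n N ψ (idx1 n q) ∨ u = wv n N ψ (idx2 n q)) →
      (v = wv n N ψ (idx0 n q) ∨ v = wv n N ψ (idx1 n q) ∨ v = wv n N ψ (idx2 n q)) →
      (u = wv n N ψ (idx0 n q') ∨ u = wv n N ψ (idx1 n q') ∨ u = wv n N ψ (idx2 n q')) →
      (v = wv n N ψ (idx0 n q') ∨ v = wv n N ψ (idx1 n q') ∨ v = wv n N ψ (idx2 n q')) →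
      q = q' := by
    intro q q' u v huv h1 h2 h3 h4
    have getα : ∀ (w : ℕ) (qq : Fin n × Fin n),
        (w = wv n N ψ (idx0 n qq) ∨ w = wv n N ψ (idx1 n qq) ∨ w = wv n N ψ (idx2 n qq)) →
        ∃ α, (α = idx0 n qq ∨ α = idx1 n qq ∨ α = idx2 n qq) ∧ wv n N ψ α = w := by
      rintro w qq (h|h|h)
      exacts [⟨idx0 n qq, Or.inl rfl, h.symm⟩, ⟨idx1 n qq, Or.inr (Or.inl rfl), h.symm⟩,
        ⟨idx2 n qq, Or.inr (Or.inr rfl), h.symm⟩]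
    obtain ⟨α, hα1, hα2⟩ := getα u q h1
    obtain ⟨α', hα'1, hα'2⟩ := getα u q' h3
    obtain ⟨β, hβ1, hβ2⟩ := getα v q h2
    obtain ⟨β', hβ'1, hβ'2⟩ := getα v q' h4
    have hidx : ∀ (qq : Fin n × Fin n) (γ : ℕ),
        (γ = idx0 n qq ∨ γ = idx1 n qq ∨ γ = idx2 n qq) → γ < n + n + n := by
      rintro qq γ (rfl|rfl|rfl)
      exacts [hidx0 qq, hidx1 qq, hidx2 qq]
    have eα : α = α' := hwv_inj _ _ (hidx q α hα1) (hidx q' α' hα'1) (by rw [hα2, hα'2])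
    have eβ : β = β' := hwv_inj _ _ (hidx q β hβ1) (hidx q' β' hβ'1) (by rw [hβ2, hβ'2])
    subst eα; subst eβ
    have hαβ : α ≠ β := by rintro rfl; exact huv (hα2 ▸ hβ2 ▸ rfl)
    have hq1 := q.1.isLt; have hq2 := q.2.isLt
    have hq1' := q'.1.isLt; have hq2' := q'.2.isLt
    have hkq := hk q; have hkq' := hk q'
    unfold idx0 idx1 idx2 at hα1 hα'1 hβ1 hβ'1
    have key : (q.1.val = q'.1.val ∧ q.2.val = q'.2.val) ∨
        (q.1.val = q'.1.val ∧ (q.1.val + q.2.val) % n = (q'.1.val + q'.2.val) % n) ∨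
        (q.2.val = q'.2.val ∧ (q.1.val + q.2.val) % n = (q'.1.val + q'.2.val) % n) := by
      omega
    have hfin : q.1.val = q'.1.val ∧ q.2.val = q'.2.val := by
      rcases key with ⟨e1, e2⟩ | ⟨e1, e2⟩ | ⟨e1, e2⟩
      · exact ⟨e1, e2⟩
      · refine ⟨e1, ?_⟩
        rw [e1] at e2
        exact mod_cancel_right q.2.isLt q'.2.isLt e2
      · refine ⟨?_, e1⟩
        rw [e1] at e2
        exact mod_cancel_left q.1.isLt q'.1.isLt e2
    have : q.1 = q'.1 := Fin.ext hfin.1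
    have : q.2 = q'.2 := Fin.ext hfin.2
    exact Prod.ext ‹q.1 = q'.1› ‹q.2 = q'.2›
  -- designated coordinates
  have hdlt : ∀ p : (Fin n × Fin n) × Fin 3, dcode n N ψ p.1 p.2 < N * N :=
    fun p => pcode_lt (hloN p.1 p.2) (hhiN p.1 p.2)
  set Df : (Fin n × Fin n) × Fin 3 → Fin (N * N) :=
    fun p => ⟨dcode n N ψ p.1 p.2, hdlt p⟩ with hDf
  have hDf_inj : Function.Injective Df := by
    rintro ⟨q, t⟩ ⟨q', t'⟩ h
    have hval : dcode n N ψ q t = dcode n N ψ q' t' := congrArg Fin.val h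
    obtain ⟨e1, e2⟩ := pcode_inj (hlohi q t) (hlohi q' t') (hhiN q t) (hhiN q' t') hval
    have hqq : q = q' := by
      refine qdet q q' (dlo n N ψ q t) (dhi n N ψ q t) (Nat.ne_of_lt (hlohi q t))
        (hlomem q t) (hhimem q t) ?_ ?_
      · rw [e1]; exact hlomem q' t'
      · rw [e2]; exact hhimem q' t'
    subst hqq
    suffices htt : t = t' by rw [htt]
    have hs1 := (hsort q).1
    have hs2 := (hsort q).2.1
    obtain ⟨tv, htv⟩ := t
    obtain ⟨tv', htv'⟩ := t'
    interval_cases tv <;> interval_cases tv' <;> first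
      | rfl
      | (exfalso
         first
          | (have e1' : stX n N ψ q = stY n N ψ q := e1; omega)
          | (have e1' : stY n N ψ q = stX n N ψ q := e1; omega)
          | (have e2' : stY n N ψ q = stZ n N ψ q := e2; omega)
          | (have e2' : stZ n N ψ q = stY n N ψ q := e2; omega))
  -- the injection into patterns × rest
  set Dimg : Finset (Fin (N * N)) := Finset.univ.image Df with hDimgdef
  set Rest : Finset (Fin (N * N)) := Finset.univ \ Dimg with hRest
  set F : (Fin (N * N) → Fin 3) →
      ((Fin n × Fin n → Fin 3 × Fin 3 × Fin 3) × (↥Rest → Fin 3)) :=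
    fun g' => (fun q => (g' (Df (q, 0)), g' (Df (q, 1)), g' (Df (q, 2))), fun r => g' r.1)
    with hF
  have hFinj : Function.Injective F := by
    intro g1 g2 h
    funext x
    by_cases hx : x ∈ Dimg
    · obtain ⟨p, -, rfl⟩ := Finset.mem_image.mp hx
      obtain ⟨q, t⟩ := p
      have h1 : (F g1).1 q = (F g2).1 q := congrFun (congrArg Prod.fst h) q
      rw [hF] at h1
      obtain ⟨tv, htv⟩ := t
      interval_cases tv
      · exact congrArg (fun r => r.1) h1
      · exact congrArg (fun r => r.2.1) h1
      · exact congrArg (fun r => r.2.2) h1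
    · have hr : x ∈ Rest := by rw [hRest]; simp [hx]
      exact congrFun (congrArg Prod.snd h) ⟨x, hr⟩
  set Tgt : Finset ((Fin n × Fin n → Fin 3 × Fin 3 × Fin 3) × (↥Rest → Fin 3)) :=
    (Finset.univ.filter (fun h => ∀ q, h q ≠ (0, 1, 2))) ×ˢ Finset.univ with hTgt
  have hmaps : ∀ g' ∈ s, F g' ∈ Tgt := by
    intro g' hg'
    rw [hTgt, Finset.mem_product]
    refine ⟨Finset.mem_filter.mpr ⟨Finset.mem_univ _, ?_⟩, Finset.mem_univ _⟩
    intro q hq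
    apply hs g' hg' q
    rw [hF] at hq
    simp only [Prod.mk.injEq] at hq
    obtain ⟨c0, c1, c2⟩ := hq
    refine ⟨stX n N ψ q, stY n N ψ q, stZ n N ψ q, (hsort q).1, (hsort q).2.1,
      (hsort q).2.2, ?_, ?_, ?_⟩
    · show extg N g' (pcode N (stX n N ψ q) (stY n N ψ q)) = 0
      unfold extg
      rw [dif_pos (pcode_lt (hXN q) (hYN q))]
      exact c0
    · show extg N g' (pcode N (stY n N ψ q) (stZ n N ψ q)) = 1
      unfold extg
      rw [dif_pos (pcode_lt (hYN q) (hZN q))]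
      exact c1
    · show extg N g' (pcode N (stX n N ψ q) (stZ n N ψ q)) = 2
      unfold extg
      rw [dif_pos (pcode_lt (hXN q) (hZN q))]
      exact c2
  have hcard := Finset.card_le_card_of_injOn F hmaps (hFinj.injOn)
  refine le_trans hcard ?_
  rw [hTgt, Finset.card_product]
  have e1 : (Finset.univ.filter
      (fun h : Fin n × Fin n → Fin 3 × Fin 3 × Fin 3 => ∀ q, h q ≠ (0, 1, 2))).card
      = 26 ^ (n * n) := by
    rw [← Fintype.card_subtype]
    rw [Fintype.card_congr (Equiv.subtypePiEquivPi
      (p := fun _ t => t ≠ ((0 : Fin 3), (1 : Fin 3), (2 : Fin 3))))]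
    rw [Fintype.card_pi]
    have h26 : ∀ q : Fin n × Fin n,
        Fintype.card {t : Fin 3 × Fin 3 × Fin 3 // t ≠ (0, 1, 2)} = 26 := by
      intro q; decide
    rw [Finset.prod_congr rfl (fun q _ => h26 q), Finset.prod_const, Finset.card_univ,
      Fintype.card_prod, Fintype.card_fin]
  have e2 : (Finset.univ : Finset (↥Rest → Fin 3)).card = 3 ^ (N * N - 3 * (n * n)) := by
    rw [Finset.card_univ, Fintype.card_fun, Fintype.card_fin, Fintype.card_coe]
    congr 1
    rw [hRest, Finset.card_sdiff_of_subset (Finset.subset_univ _), Finset.card_univ, Fintype.card_fin,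
      hDimgdef, Finset.card_image_of_injective _ hDf_inj, Finset.card_univ]
    congr 1
    simp only [Fintype.card_prod, Fintype.card_fin]
    ring
  rw [e1, e2]

end counting

lemma exists_good {n N : ℕ} (hn : 0 < n) (hN3 : n + n + n ≤ N)
    (hnum : N ^ (n + n + n) * 26 ^ (n * n) < 27 ^ (n * n)) :
    ∃ g : ℕ → Fin 3, ∀ ψ : Fin (n + n + n) → Fin N, Function.Injective ψ →
      ¬ AllBlue n N g ψ := by
  classical
  set Bad : Finset (Fin (N * N) → Fin 3) := Finset.univ.filter
    (fun g' => ∃ ψ : Fin (n + n + n) → Fin N, Function.Injective ψ ∧ AllBlue n N (extg N g') ψ)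
    with hBad
  have hsub : Bad ⊆ (Finset.univ.filter
      (fun ψ : Fin (n + n + n) → Fin N => Function.Injective ψ)).biUnion
      (fun ψ => Finset.univ.filter (fun g' => AllBlue n N (extg N g') ψ)) := by
    intro g' hg'
    rw [hBad, Finset.mem_filter] at hg'
    obtain ⟨-, ψ, hψ, hAB⟩ := hg'
    exact Finset.mem_biUnion.mpr ⟨ψ, by simp [hψ], by simp [hAB]⟩
  have hBadcard : Bad.card ≤ N ^ (n + n + n) * (26 ^ (n * n) * 3 ^ (N * N - 3 * (n * n))) := by
    refine le_trans (Finset.card_le_card hsub) ?_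
    refine le_trans Finset.card_biUnion_le ?_
    refine le_trans (Finset.sum_le_card_nsmul _ _ (26 ^ (n * n) * 3 ^ (N * N - 3 * (n * n))) ?_) ?_
    · intro ψ hψ
      rw [Finset.mem_filter] at hψ
      exact count_bad hn hN3 hψ.2 _ (fun g' hg' => (Finset.mem_filter.mp hg').2)
    · rw [smul_eq_mul]
      apply Nat.mul_le_mul_right
      refine le_trans (Finset.card_filter_le _ _) ?_
      rw [Finset.card_univ, Fintype.card_fun, Fintype.card_fin, Fintype.card_fin]
  have htotal : (Finset.univ : Finset (Fin (N * N) → Fin 3)).card = 3 ^ (N * N) := by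
    rw [Finset.card_univ, Fintype.card_fun, Fintype.card_fin, Fintype.card_fin]
  have h3le : 3 * (n * n) ≤ N * N := by
    have h9 : (n + n + n) * (n + n + n) = 9 * (n * n) := by ring
    have := Nat.mul_le_mul hN3 hN3
    omega
  have hlt : Bad.card < (Finset.univ : Finset (Fin (N * N) → Fin 3)).card := by
    rw [htotal]
    have hsplit : 3 ^ (N * N) = 27 ^ (n * n) * 3 ^ (N * N - 3 * (n * n)) := by
      have h27 : (27 : ℕ) = 3 ^ 3 := by norm_num
      rw [h27, ← pow_mul, ← pow_add]
      congr 1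
      omega
    rw [hsplit]
    calc Bad.card ≤ N ^ (n + n + n) * (26 ^ (n * n) * 3 ^ (N * N - 3 * (n * n))) := hBadcard
      _ = (N ^ (n + n + n) * 26 ^ (n * n)) * 3 ^ (N * N - 3 * (n * n)) := by ring
      _ < 27 ^ (n * n) * 3 ^ (N * N - 3 * (n * n)) :=
          mul_lt_mul_of_pos_right hnum (pow_pos (by norm_num) _)
  obtain ⟨g', hg'⟩ : ∃ g', g' ∉ Bad := by
    by_contra hcon
    push_neg at hcon
    have h := Finset.card_le_card (fun g' (_ : g' ∈ Finset.univ) => hcon g')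
    omega
  refine ⟨extg N g', ?_⟩
  intro ψ hψ hAB
  apply hg'
  rw [hBad, Finset.mem_filter]
  exact ⟨Finset.mem_univ _, ψ, hψ, hAB⟩

lemma no_blue {n N : ℕ} (hn : 0 < n) (hN3 : n + n + n ≤ N)
    (hnum : N ^ (n + n + n) * 26 ^ (n * n) < 27 ^ (n * n)) :
    ∃ g : ℕ → Fin 3, ¬ hasMonoCopy N (chi N g) (tripartite n n n) false := by
  obtain ⟨g, hg⟩ := exists_good hn hN3 hnum
  refine ⟨g, ?_⟩
  rintro ⟨φ, hinj, hlt, hblue⟩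
  have hvm : ∀ m, m < n + n + n → m ∈ (tripartite n n n).verts := by
    intro m hm; exact Finset.mem_range.mpr hm
  have hltm : ∀ m, m < n + n + n → φ m < N := fun m hm => hlt m (hvm m hm)
  set ψ : Fin (n + n + n) → Fin N := fun i => ⟨φ i.val, hltm i.val i.isLt⟩ with hψdef
  have hψ : Function.Injective ψ := by
    intro a a' h
    have h2 : φ a.val = φ a'.val := congrArg Fin.val h
    have h3 := hinj (Finset.mem_coe.mpr (hvm a.val a.isLt))
      (Finset.mem_coe.mpr (hvm a'.val a'.isLt)) h2
    exact Fin.ext h3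
  obtain ⟨q, hq⟩ : ∃ q : Fin n × Fin n,
      RedProp N g {wv n N ψ (idx0 n q), wv n N ψ (idx1 n q), wv n N ψ (idx2 n q)} := by
    by_contra hcon
    push_neg at hcon
    exact hg ψ hψ (fun q => hcon q)
  have hi : q.1.val < n := q.1.isLt
  have hj : q.2.val < n := q.2.isLt
  have hk : (q.1.val + q.2.val) % n < n := Nat.mod_lt _ hn
  have hwv : ∀ m (hm : m < n + n + n), wv n N ψ m = φ m := by
    intro m hm
    unfold wv
    rw [dif_pos hm, hψdef]
  have hwv0 : wv n N ψ (idx0 n q) = φ q.1.val := hwv _ (by unfold idx0; omega)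
  have hwv1 : wv n N ψ (idx1 n q) = φ (n + q.2.val) := hwv _ (by unfold idx1; omega)
  have hwv2 : wv n N ψ (idx2 n q) = φ (n + n + (q.1.val + q.2.val) % n) :=
    hwv _ (by unfold idx2; omega)
  set e : Finset ℕ := {q.1.val, n + q.2.val, n + n + (q.1.val + q.2.val) % n} with hedef
  have he : e ∈ (tripartite n n n).edges := by
    rw [tripartite]
    refine Finset.mem_filter.mpr ⟨Finset.mem_powersetCard.mpr ⟨?_, ?_⟩, ?_, ?_, ?_⟩
    · intro x hx
      rw [hedef] at hx
      simp only [Finset.mem_insert, Finset.mem_singleton] at hx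
      refine Finset.mem_range.mpr ?_
      omega
    · rw [hedef, Finset.card_insert_of_notMem (by simp; omega),
        Finset.card_insert_of_notMem (by simp; omega), Finset.card_singleton]
    · have : e.filter (fun x => x < n) = {q.1.val} := by
        ext x
        rw [hedef]
        simp only [Finset.mem_filter, Finset.mem_insert, Finset.mem_singleton]
        omega
      rw [this, Finset.card_singleton]
    · have : e.filter (fun x => n ≤ x ∧ x < n + n) = {n + q.2.val} := by
        ext x
        rw [hedef]
        simp only [Finset.mem_filter, Finset.mem_insert, Finset.mem_singleton]
        omega
      rw [this, Finset.card_singleton]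
    · have : e.filter (fun x => n + n ≤ x) = {n + n + (q.1.val + q.2.val) % n} := by
        ext x
        rw [hedef]
        simp only [Finset.mem_filter, Finset.mem_insert, Finset.mem_singleton]
        omega
      rw [this, Finset.card_singleton]
  have hbl := hblue e he
  rw [chi_false_iff] at hbl
  apply hbl
  have himg : e.image φ = {φ q.1.val, φ (n + q.2.val), φ (n + n + (q.1.val + q.2.val) % n)} := by
    rw [hedef]
    simp [Finset.image_insert]
  rw [himg, ← hwv0, ← hwv1, ← hwv2]
  exact hq


def MonoOn (χ : Finset ℕ → Bool) (c : Bool) (k : ℕ) (T : Finset ℕ) : Prop :=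
  ∀ t ⊆ T, t.card = k → χ t = c

lemma empty_mono {χ : Finset ℕ → Bool} {c : Bool} {k : ℕ} (hk : 0 < k) :
    MonoOn χ c k ∅ := by
  intro t ht hc
  have : t.card ≤ 0 := by simpa using Finset.card_le_card ht
  omega

lemma pair_cases {x : ℕ} {T t : Finset ℕ} (ht : t ⊆ insert x T) (hc : t.card = 2)
    (hxt : x ∈ t) : ∃ y ∈ T, t = {x, y} := by
  obtain ⟨u, v, huv, rfl⟩ := Finset.card_eq_two.mp hc
  rcases Finset.mem_insert.mp hxt with h | h
  · subst h
    refine ⟨v, ?_, rfl⟩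
    rcases Finset.mem_insert.mp (ht (by simp : v ∈ ({x, v} : Finset ℕ))) with h2 | h2
    · exact absurd h2.symm huv
    · exact h2
  · rw [Finset.mem_singleton] at h
    subst h
    refine ⟨u, ?_, Finset.pair_comm u x⟩
    rcases Finset.mem_insert.mp (ht (by simp : u ∈ ({u, x} : Finset ℕ))) with h2 | h2
    · exact absurd h2 huv
    · exact h2

lemma mono_insert {χ : Finset ℕ → Bool} {c : Bool} {x : ℕ} {T : Finset ℕ}
    (hT : MonoOn χ c 2 T) (hx : ∀ y ∈ T, χ {x, y} = c) : MonoOn χ c 2 (insert x T) := by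
  intro t ht hc2
  by_cases hxt : x ∈ t
  · obtain ⟨y, hy, rfl⟩ := pair_cases ht hc2 hxt
    exact hx y hy
  · refine hT t ?_ hc2
    intro y hy
    rcases Finset.mem_insert.mp (ht hy) with rfl | h
    · exact absurd hy hxt
    · exact h

/-- graph (pair) Ramsey -/
lemma ramsey2 : ∀ K a b : ℕ, a + b ≤ K → ∀ (S : Finset ℕ) (χ : Finset ℕ → Bool),
    2 ^ (a + b) ≤ S.card →
    (∃ T ⊆ S, T.card = a ∧ MonoOn χ true 2 T) ∨
    (∃ T ⊆ S, T.card = b ∧ MonoOn χ false 2 T) := by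
  intro K
  induction K with
  | zero =>
    intro a b hab S χ hS
    left
    exact ⟨∅, Finset.empty_subset _, by simp; omega, empty_mono (by norm_num)⟩
  | succ K ih =>
    intro a b hab S χ hS
    rcases Nat.eq_zero_or_pos a with rfl | ha
    · exact Or.inl ⟨∅, Finset.empty_subset _, by simp, empty_mono (by norm_num)⟩
    rcases Nat.eq_zero_or_pos b with rfl | hb
    · exact Or.inr ⟨∅, Finset.empty_subset _, by simp, empty_mono (by norm_num)⟩
    have hSne : S.Nonempty := by
      rw [← Finset.card_pos]
      have : 0 < 2 ^ (a + b) := pow_pos (by norm_num) _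
      omega
    obtain ⟨x, hx⟩ := hSne
    set A := (S.erase x).filter (fun y => χ {x, y} = true) with hA
    set B := (S.erase x).filter (fun y => χ {x, y} = false) with hB
    have hAS : A ⊆ S := fun y hy => Finset.mem_of_mem_erase (Finset.mem_of_mem_filter _ hy)
    have hBS : B ⊆ S := fun y hy => Finset.mem_of_mem_erase (Finset.mem_of_mem_filter _ hy)
    have hcards : A.card + B.card = S.card - 1 := by
      have hdisj : Disjoint A B := by
        rw [Finset.disjoint_left]
        intro y hyA hyB
        rw [hA, Finset.mem_filter] at hyA
        rw [hB, Finset.mem_filter] at hyB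
        rw [hyA.2] at hyB
        exact absurd hyB.2 (by simp)
      have hunion : A ∪ B = S.erase x := by
        rw [hA, hB, ← Finset.filter_or]
        apply Finset.filter_true_of_mem
        intro y hy
        rcases Bool.eq_false_or_eq_true (χ {x, y}) with h | h <;>
          first | (left; exact h) | (right; exact h)
      rw [← Finset.card_union_of_disjoint hdisj, hunion, Finset.card_erase_of_mem hx]
    have hpow : 2 ^ (a + b) = 2 ^ (a - 1 + b) + 2 ^ (a + (b - 1)) := by
      have h1 : a + b = (a - 1 + b) + 1 := by omega
      have h2 : a - 1 + b = a + (b - 1) := by omega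
      rw [h1, pow_succ, ← h2]
      ring
    have hxA : x ∉ A := fun h => Finset.notMem_erase x S (Finset.mem_of_mem_filter _ h)
    have hxB : x ∉ B := fun h => Finset.notMem_erase x S (Finset.mem_of_mem_filter _ h)
    by_cases hAc : 2 ^ (a - 1 + b) ≤ A.card
    · rcases ih (a - 1) b (by omega) A χ hAc with ⟨T, hT, hTc, hTm⟩ | ⟨T, hT, hTc, hTm⟩
      · left
        refine ⟨insert x T, Finset.insert_subset hx (hT.trans hAS), ?_, ?_⟩
        · rw [Finset.card_insert_of_notMem (fun h => hxA (hT h)), hTc]; omega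
        · refine mono_insert hTm ?_
          intro y hy
          have := hT hy
          rw [hA, Finset.mem_filter] at this
          exact this.2
      · exact Or.inr ⟨T, hT.trans hAS, hTc, hTm⟩
    · have hBc : 2 ^ (a + (b - 1)) ≤ B.card := by omega
      rcases ih a (b - 1) (by omega) B χ hBc with ⟨T, hT, hTc, hTm⟩ | ⟨T, hT, hTc, hTm⟩
      · exact Or.inl ⟨T, hT.trans hBS, hTc, hTm⟩
      · right
        refine ⟨insert x T, Finset.insert_subset hx (hT.trans hBS), ?_, ?_⟩
        · rw [Finset.card_insert_of_notMem (fun h => hxB (hT h)), hTc]; omega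
        · refine mono_insert hTm ?_
          intro y hy
          have := hT hy
          rw [hB, Finset.mem_filter] at this
          exact this.2

/-- 3-uniform Ramsey, Erdős–Rado style -/
lemma ramsey3 : ∀ J a b : ℕ, a + b ≤ J → ∃ M : ℕ, ∀ (S : Finset ℕ) (χ : Finset ℕ → Bool),
    M ≤ S.card →
    (∃ T ⊆ S, T.card = a ∧ MonoOn χ true 3 T) ∨
    (∃ T ⊆ S, T.card = b ∧ MonoOn χ false 3 T) := by
  intro J
  induction J with
  | zero =>
    intro a b hab
    exact ⟨0, fun S χ _ => Or.inl ⟨∅, Finset.empty_subset _, by simp; omega,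
      empty_mono (by norm_num)⟩⟩
  | succ J ih =>
    intro a b hab
    rcases Nat.eq_zero_or_pos a with rfl | ha
    · exact ⟨0, fun S χ _ => Or.inl ⟨∅, Finset.empty_subset _, by simp,
        empty_mono (by norm_num)⟩⟩
    rcases Nat.eq_zero_or_pos b with rfl | hb
    · exact ⟨0, fun S χ _ => Or.inr ⟨∅, Finset.empty_subset _, by simp,
        empty_mono (by norm_num)⟩⟩
    obtain ⟨Ma, hMa⟩ := ih (a - 1) b (by omega)
    obtain ⟨Mb, hMb⟩ := ih a (b - 1) (by omega)
    refine ⟨2 ^ (Ma + Mb) + 1, ?_⟩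
    intro S χ hS
    have hp2 : 0 < 2 ^ (Ma + Mb) := pow_pos (by norm_num) _
    have hSne : S.Nonempty := by rw [← Finset.card_pos]; omega
    obtain ⟨x, hx⟩ := hSne
    set χ2 : Finset ℕ → Bool := fun t => χ (insert x t) with hχ2
    have herase : 2 ^ (Ma + Mb) ≤ (S.erase x).card := by
      rw [Finset.card_erase_of_mem hx]; omega
    -- helper for the "insert x" step
    have step : ∀ (cc : Bool) (T T' : Finset ℕ), T ⊆ S.erase x → T' ⊆ T →
        MonoOn χ2 cc 2 T → MonoOn χ cc 3 T' → MonoOn χ cc 3 (insert x T') := by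
      intro cc T T' hT hT' hm2 hm3
      intro t ht hc3
      by_cases hxt : x ∈ t
      · have ht' : t.erase x ⊆ T' := by
          intro y hy
          rw [Finset.mem_erase] at hy
          rcases Finset.mem_insert.mp (ht hy.2) with h | h
          · exact absurd h hy.1
          · exact h
        have hce : (t.erase x).card = 2 := by
          rw [Finset.card_erase_of_mem hxt, hc3]
        have := hm2 (t.erase x) (ht'.trans hT') hce
        rw [hχ2] at this
        simp only at this
        rwa [Finset.insert_erase hxt] at this
      · refine hm3 t ?_ hc3
        intro y hy
        rcases Finset.mem_insert.mp (ht hy) with rfl | h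
        · exact absurd hy hxt
        · exact h
    rcases ramsey2 (Ma + Mb) Ma Mb le_rfl (S.erase x) χ2 herase with
      ⟨T, hT, hTc, hTm⟩ | ⟨T, hT, hTc, hTm⟩
    · -- red link
      rcases hMa T χ (by omega) with ⟨T', hT', hTc', hTm'⟩ | ⟨T', hT', hTc', hTm'⟩
      · left
        have hxT' : x ∉ T' := fun h => Finset.notMem_erase x S (hT (hT' h))
        refine ⟨insert x T', ?_, ?_, step true T T' hT hT' hTm hTm'⟩
        · exact Finset.insert_subset hx
            (fun y hy => Finset.mem_of_mem_erase (hT (hT' hy)))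
        · rw [Finset.card_insert_of_notMem hxT', hTc']; omega
      · right
        exact ⟨T', fun y hy => Finset.mem_of_mem_erase (hT (hT' hy)), hTc', hTm'⟩
    · -- blue link
      rcases hMb T χ (by omega) with ⟨T', hT', hTc', hTm'⟩ | ⟨T', hT', hTc', hTm'⟩
      · left
        exact ⟨T', fun y hy => Finset.mem_of_mem_erase (hT (hT' hy)), hTc', hTm'⟩
      · right
        have hxT' : x ∉ T' := fun h => Finset.notMem_erase x S (hT (hT' h))
        refine ⟨insert x T', ?_, ?_, step false T T' hT hT' hTm hTm'⟩
        · exact Finset.insert_subset hx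
            (fun y hy => Finset.mem_of_mem_erase (hT (hT' hy)))
        · rw [Finset.card_insert_of_notMem hxT', hTc']; omega

/-- a monochromatic clique contains a copy of any small enough 3-graph -/
lemma copy_of_mono {N : ℕ} {χ : Finset ℕ → Bool} {c : Bool} (G : ThreeGraph)
    (T : Finset ℕ) (hTN : T ⊆ Finset.range N) (hc : G.verts.card ≤ T.card)
    (hm : MonoOn χ c 3 T) : hasMonoCopy N χ G c := by
  classical
  set k := G.verts.card with hk
  set ι := G.verts.orderIsoOfFin hk.symm with hι
  set emb := T.orderEmbOfCardLe hc with hemb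
  set φ : ℕ → ℕ := fun v => if h : v ∈ G.verts then emb (ι.symm ⟨v, h⟩) else 0 with hφ
  have hφmem : ∀ v ∈ G.verts, φ v ∈ T := by
    intro v hv
    rw [hφ]
    simp only [dif_pos hv]
    exact Finset.orderEmbOfCardLe_mem T hc _
  have hinj : Set.InjOn φ ↑G.verts := by
    intro v hv v' hv' h
    rw [Finset.mem_coe] at hv hv'
    rw [hφ] at h
    simp only [dif_pos hv, dif_pos hv'] at h
    have h2 := emb.injective h
    have h3 := ι.symm.injective h2
    exact congrArg Subtype.val h3
  refine ⟨φ, hinj, ?_, ?_⟩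
  · intro v hv
    exact Finset.mem_range.mp (hTN (hφmem v hv))
  · intro e he
    refine hm (e.image φ) ?_ ?_
    · intro y hy
      obtain ⟨v, hv, rfl⟩ := Finset.mem_image.mp hy
      exact hφmem v (G.subset_verts e he hv)
    · rw [Finset.card_image_of_injOn (hinj.mono ?_), G.card_eq e he]
      exact_mod_cast G.subset_verts e he
/-- the Ramsey set is nonempty -/
lemma ramsey_set_nonempty (H : ThreeGraph) (n : ℕ) :
    {N : ℕ | ∀ χ : Finset ℕ → Bool,
      hasMonoCopy N χ H true ∨ hasMonoCopy N χ (tripartite n n n) false}.Nonempty := by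
  set m := max H.verts.card (n + n + n) with hm
  obtain ⟨M, hM⟩ := ramsey3 (m + m) m m le_rfl
  refine ⟨M, ?_⟩
  intro χ
  rcases hM (Finset.range M) χ (by rw [Finset.card_range]) with
    ⟨T, hT, hTc, hTm⟩ | ⟨T, hT, hTc, hTm⟩
  · exact Or.inl (copy_of_mono H T hT (by rw [hTc]; exact le_max_left _ _) hTm)
  · refine Or.inr (copy_of_mono (tripartite n n n) T hT ?_ hTm)
    have : (tripartite n n n).verts.card = n + n + n := by
      rw [tripartite]
      exact Finset.card_range _
    rw [this, hTc]
    exact le_max_right _ _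

/-- If `H` is a nonempty 3-graph with `m_pair(H) > 1/3`, then
`r(H, K_{n,n,n}^{(3)}) ≥ 2^{c n}` for some `c > 0` and all sufficiently large `n`. -/
theorem mpair_third_ramsey_lower (H : ThreeGraph) (hne : H.edges.Nonempty)
    (hm : mpair H > 1 / 3) :
    ∃ c : ℝ, c > 0 ∧ ∃ n₀ : ℕ, ∀ n : ℕ, n₀ ≤ n →
      (ramsey H (tripartite n n n) : ℝ) ≥ (2 : ℝ) ^ (c * n) := by
  refine ⟨1/100, by norm_num, 1, ?_⟩
  intro n hn
  by_contra hcon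
  push_neg at hcon
  have hMmem : ramsey H (tripartite n n n) ∈ {N : ℕ | ∀ χ : Finset ℕ → Bool,
      hasMonoCopy N χ H true ∨ hasMonoCopy N χ (tripartite n n n) false} :=
    Nat.sInf_mem (ramsey_set_nonempty H n)
  set M := ramsey H (tripartite n n n) with hMdef
  by_cases hbig : n + n + n ≤ M
  · -- the counting regime
    have hnum : M ^ (n+n+n) * 26 ^ (n*n) < 27 ^ (n*n) := by
      have base : (2:ℝ) ^ ((3:ℝ)/100) * 26 ≤ 27 := by
        have key : ((2:ℝ) ^ ((3:ℝ)/100)) ^ (100:ℕ) = 8 := by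
          rw [← Real.rpow_natCast ((2:ℝ) ^ ((3:ℝ)/100)) 100, ← Real.rpow_mul (by norm_num)]
          rw [show ((3:ℝ)/100) * (100:ℕ) = ((3:ℕ):ℝ) by push_cast; ring, Real.rpow_natCast]
          norm_num
        have h1 : (2:ℝ) ^ ((3:ℝ)/100) ≤ 27/26 := by
          apply le_of_pow_le_pow_left₀ (n := 100) (by norm_num) (by norm_num)
          rw [key, div_pow, le_div_iff₀ (by positivity)]
          norm_num
        calc (2:ℝ) ^ ((3:ℝ)/100) * 26 ≤ (27/26) * 26 :=
              mul_le_mul_of_nonneg_right h1 (by norm_num)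
          _ = 27 := by norm_num
      have hA : ((M:ℝ)) ^ (n+n+n) < ((2:ℝ) ^ ((1/100 : ℝ) * n)) ^ (n+n+n) :=
        pow_lt_pow_left₀ hcon (Nat.cast_nonneg M) (by omega)
      have hB : ((2:ℝ) ^ ((1/100 : ℝ) * n)) ^ (n+n+n) = ((2:ℝ) ^ ((3:ℝ)/100)) ^ (n*n) := by
        rw [← Real.rpow_natCast ((2:ℝ) ^ ((1/100 : ℝ) * n)) (n+n+n),
          ← Real.rpow_mul (by norm_num),
          ← Real.rpow_natCast ((2:ℝ) ^ ((3:ℝ)/100)) (n*n),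
          ← Real.rpow_mul (by norm_num)]
        congr 1
        push_cast
        ring
      have hchain : ((M:ℝ)) ^ (n+n+n) * 26 ^ (n*n) < 27 ^ (n*n) := by
        calc ((M:ℝ)) ^ (n+n+n) * 26 ^ (n*n)
            < ((2:ℝ) ^ ((3:ℝ)/100)) ^ (n*n) * 26 ^ (n*n) := by
              apply mul_lt_mul_of_pos_right (hB ▸ hA) (by positivity)
          _ = ((2:ℝ) ^ ((3:ℝ)/100) * 26) ^ (n*n) := by rw [mul_pow]
          _ ≤ 27 ^ (n*n) := pow_le_pow_left₀ (by positivity) base _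
      exact_mod_cast hchain
    obtain ⟨g, hgblue⟩ := no_blue (by omega) hbig hnum
    rcases hMmem (chi M g) with hred | hblue
    · exact no_red H hne hm M g hred
    · exact hgblue hblue
  · -- M < 3n : not even enough room for the tripartite vertices
    rcases hMmem (chi M (fun _ => 0)) with hred | hblue
    · exact no_red H hne hm M _ hred
    · obtain ⟨φ, hinj, hlt, -⟩ := hblue
      have himg : (tripartite n n n).verts.image φ ⊆ Finset.range M := by
        intro y hy
        obtain ⟨v, hv, rfl⟩ := Finset.mem_image.mp hy
        exact Finset.mem_range.mpr (hlt v hv)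
      have hcard : (tripartite n n n).verts.card ≤ M := by
        calc (tripartite n n n).verts.card = ((tripartite n n n).verts.image φ).card :=
              (Finset.card_image_of_injOn hinj).symm
          _ ≤ (Finset.range M).card := Finset.card_le_card himg
          _ = M := Finset.card_range M
      have hv3 : (tripartite n n n).verts.card = n + n + n := Finset.card_range _
      omega
end

section
/- A nonempty 3-graph H is avoidable if and only if m_pair(H) ≥ 1/2. -/
/-!
Fix a pair homomorphism `f` into an oriented 3-graph. As the target is oriented, distinct edges of
`f(H')` have distinct vertex sets, so `e(f(H'))` and `v(f(H'))` count the edges and vertices of the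
3-graph `F(H')` of these vertex sets, and avoidability asks for a Berge cycle in `F(H)`.
A Berge cycle of length `t` spans `t` edges on at most `2t` vertices. Conversely, if no edge of a
3-graph has two vertices already joined through the other edges, adding the edges one at a time
shows that it has at least `2e + 1` vertices; and if some edge has, a path in the incidence graph
of the other edges closes up into a Berge cycle. So `F(H)` has a Berge cycle iff
`e(f(H')) / v(f(H')) ≥ 1/2` for some nonempty `H' ⊆ H`, that is, iff the largest of these
finitely many densities is at least `1/2`.
-/

lemma Finset.exists_ne_not_of_three_le_card {α : Type*} {e : Finset α} (he : 3 ≤ e.card)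
    {P : α → Prop} (hP : ∀ x ∈ e, ∀ y ∈ e, P x → P y → x = y) :
    ∃ y ∈ e, ∃ z ∈ e, y ≠ z ∧ ¬ P y ∧ ¬ P z := by
  classical
  have hle : (e.filter P).card ≤ 1 :=
    card_le_one.2 fun x hx y hy => hP x (mem_filter.1 hx).1 y (mem_filter.1 hy).1
      (mem_filter.1 hx).2 (mem_filter.1 hy).2
  have hsum := card_filter_add_card_filter_not (s := e) P
  obtain ⟨y, hy, z, hz, hyz⟩ := one_lt_card.1 (by omega : 1 < (e.filter (¬ P ·)).card)
  rw [mem_filter] at hy hz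
  exact ⟨y, hy.1, z, hz.1, hyz, hy.2, hz.2⟩

open Finset SimpleGraph

section BergeCycle

variable {F F' : Finset (Finset ℕ)} {e : Finset ℕ} {x y z : ℕ}

def incidenceGraph (F : Finset (Finset ℕ)) : SimpleGraph (ℕ ⊕ Finset ℕ) where
  Adj
    | .inl x, .inr e | .inr e, .inl x => e ∈ F ∧ x ∈ e
    | _, _ => False
  symm := ⟨by rintro (_ | _) (_ | _) <;> simp⟩
  loopless := ⟨by rintro (_ | _) <;> simp⟩

lemma incidenceGraph_mono (h : F ⊆ F') : incidenceGraph F ≤ incidenceGraph F' := by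
  rintro (_ | _) (_ | _) hadj <;> first | exact hadj.elim | exact ⟨h hadj.1, hadj.2⟩

lemma incidenceGraph.isLeft_iff_of_adj {p q : ℕ ⊕ Finset ℕ} (h : (incidenceGraph F).Adj p q) :
    q.isLeft ↔ ¬ p.isLeft := by
  rcases p with _ | _ <;> rcases q with _ | _ <;> simp_all [incidenceGraph]

lemma incidenceGraph.isLeft_getVert_iff {u : ℕ ⊕ Finset ℕ}
    (p : (incidenceGraph F).Walk (.inl x) u) {k : ℕ} (hk : k ≤ p.length) :
    (p.getVert k).isLeft ↔ Even k := by
  induction k with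
  | zero => simp
  | succ k ih =>
    rw [isLeft_iff_of_adj (p.adj_getVert_succ hk), ih (by omega), Nat.even_add_one]

def Linked (F : Finset (Finset ℕ)) (x y : ℕ) : Prop :=
  (incidenceGraph F).Reachable (.inl x) (.inl y)

lemma Linked.refl : Linked F x x := Reachable.refl _

lemma Linked.symm (h : Linked F x y) : Linked F y x := Reachable.symm h

lemma Linked.trans (h : Linked F x y) (h' : Linked F y z) : Linked F x z := Reachable.trans h h'

lemma Linked.mono (hF : F ⊆ F') (h : Linked F x y) : Linked F' x y :=
  Reachable.mono (incidenceGraph_mono hF) h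

lemma linked_of_mem (he : e ∈ F) (hx : x ∈ e) (hy : y ∈ e) : Linked F x y :=
  (Adj.reachable (G := incidenceGraph F) (u := .inl x) (v := .inr e) ⟨he, hx⟩).trans
    (Adj.reachable (G := incidenceGraph F) (u := .inr e) (v := .inl y) ⟨he, hy⟩)

def BergeAcyclic (F : Finset (Finset ℕ)) : Prop :=
  ∀ e ∈ F, (e : Set ℕ).Pairwise fun x y => ¬ Linked (F.erase e) x y

lemma BergeAcyclic.subset (hF : BergeAcyclic F) (h : F' ⊆ F) : BergeAcyclic F' :=
  fun e he _ hx _ hy hxy hlink => hF e (h he) hx hy hxy (hlink.mono (erase_subset_erase e h))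

lemma BergeAcyclic.exists_extend_unlinked (hF : BergeAcyclic (insert e F)) (he : e ∉ F)
    (h3 : 3 ≤ e.card) {A : Finset ℕ}
    (hA : (A : Set ℕ).Pairwise fun a b => ¬ Linked (insert e F) a b) :
    ∃ y ∈ e, ∃ z ∈ e, y ≠ z ∧ y ∉ A ∧ z ∉ A ∧
      (↑(insert y (insert z A)) : Set ℕ).Pairwise fun a b => ¬ Linked F a b := by
  have hsub := subset_insert e F
  have hsep : (e : Set ℕ).Pairwise fun x y => ¬ Linked F x y := by
    simpa [erase_insert he] using hF e (mem_insert_self e F)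
  let touches x := ∃ a ∈ A, Linked F x a
  -- two vertices of `e` touching `A` would link two points of `A` through `e`
  have htouch : ∀ x ∈ e, ∀ y ∈ e, touches x → touches y → x = y := by
    rintro x hx y hy ⟨a, ha, hxa⟩ ⟨b, hb, hyb⟩
    by_contra hxy
    have hab : a = b := by
      by_contra hab
      refine hA ha hb hab (((hxa.mono hsub).symm.trans ?_).trans (hyb.mono hsub))
      exact linked_of_mem (mem_insert_self e F) hx hy
    exact hsep hx hy hxy (hxa.trans (hab ▸ hyb.symm))
  obtain ⟨y, hy, z, hz, hyz, hty, htz⟩ := Finset.exists_ne_not_of_three_le_card h3 htouch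
  have hfar {w} (hw : ¬ touches w) {a} (ha : a ∈ (A : Set ℕ)) :
      ¬ Linked F w a ∧ ¬ Linked F a w :=
    ⟨fun h => hw ⟨a, ha, h⟩, fun h => hw ⟨a, ha, h.symm⟩⟩
  refine ⟨y, hy, z, hz, hyz, fun hyA => hty ⟨y, hyA, .refl⟩,
    fun hzA => htz ⟨z, hzA, .refl⟩, ?_⟩
  rw [coe_insert, coe_insert, Set.pairwise_insert, Set.pairwise_insert]
  refine ⟨⟨hA.mono' fun a b h h' => h (h'.mono hsub), fun b hb _ => hfar htz hb⟩,
    fun b hb hyb => ?_⟩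
  rcases hb with rfl | hb
  · exact ⟨hsep hy hz hyb, hsep hz hy hyb.symm⟩
  · exact hfar hty hb

-- the points of `A` make the bound inductive: a new edge has two vertices linked to no point of
-- `A`, and they can join `A`
lemma BergeAcyclic.two_mul_card_add_card_le (hF : BergeAcyclic F) (h3 : ∀ e ∈ F, 3 ≤ e.card)
    (A : Finset ℕ) (hA : (A : Set ℕ).Pairwise fun a b => ¬ Linked F a b) :
    2 * F.card + A.card ≤ (F.biUnion id ∪ A).card := by
  induction F using Finset.induction_on generalizing A with
  | empty => simp
  | @insert e F he ih =>
    obtain ⟨y, hy, z, hz, hyz, hyA, hzA, hA'⟩ :=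
      hF.exists_extend_unlinked he (h3 e (mem_insert_self e F)) hA
    have hcount :=
      ih (hF.subset (subset_insert e F)) (fun g hg => h3 g (mem_insert_of_mem hg)) _ hA'
    have hsub : F.biUnion id ∪ insert y (insert z A) ⊆ (insert e F).biUnion id ∪ A := by
      intro w hw
      simp only [biUnion_insert, mem_union, mem_insert, id] at hw ⊢
      rcases hw with hw | rfl | rfl | hw <;> tauto
    rw [card_insert_of_notMem (by simp [hyz, hyA]), card_insert_of_notMem hzA] at hcount
    rw [card_insert_of_notMem he]
    have := card_le_card hsub
    omega

lemma BergeAcyclic.two_mul_card_lt_card_biUnion (hF : BergeAcyclic F)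
    (h3 : ∀ e ∈ F, 3 ≤ e.card) (hne : F.Nonempty) : 2 * F.card < (F.biUnion id).card := by
  obtain ⟨e, he⟩ := hne
  obtain ⟨x, hx⟩ := card_pos.1 (by have := h3 e he; omega : 0 < e.card)
  have := hF.two_mul_card_add_card_le h3 {x} (by simp)
  rwa [union_eq_left.2 (singleton_subset_iff.2 (mem_biUnion.2 ⟨e, he, hx⟩)),
    card_singleton] at this

lemma hasBergeCycle_of_closed_path {S : Set (Finset ℕ)} {n : ℕ} (hn : 1 ≤ n) {v : ℕ → ℕ}
    {e : ℕ → Finset ℕ} (hv : Set.InjOn v (Set.Iic n)) (he : Set.InjOn e (Set.Iic n))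
    (hS : ∀ i ≤ n, e i ∈ S) (hstep : ∀ i < n, v i ∈ e i ∧ v (i + 1) ∈ e i)
    (hlast : v n ∈ e n) (hfirst : v 0 ∈ e n) : HasBergeCycle S := by
  have hval (i : ZMod (n + 1)) : i.val ∈ Set.Iic n := Nat.lt_succ_iff.1 i.val_lt
  have hval_succ (i : ZMod (n + 1)) : (i + 1).val = (i.val + 1) % (n + 1) := by
    rw [ZMod.val_add, ZMod.val_one'' (by omega)]
  refine ⟨n + 1, by omega, fun i => v i.val, fun i => e i.val,
    fun i j hij => ZMod.val_injective _ (hv (hval i) (hval j) hij),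
    fun i j hij => ZMod.val_injective _ (he (hval i) (hval j) hij), fun i => ?_⟩
  refine ⟨hS _ (hval i), ?_⟩
  rcases Set.mem_Iic.1 (hval i) |>.lt_or_eq with hi | hi
  · simp only [hval_succ, Nat.mod_eq_of_lt (by omega : i.val + 1 < n + 1)]
    exact hstep _ hi
  · simp only [hval_succ, hi, Nat.mod_self]
    exact ⟨hlast, hfirst⟩

lemma Linked.exists_bergePath (h : Linked F x y) (hxy : x ≠ y) :
    ∃ n, 1 ≤ n ∧ ∃ (v : ℕ → ℕ) (e : ℕ → Finset ℕ), Set.InjOn v (Set.Iic n) ∧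
      Set.InjOn e (Set.Iio n) ∧ v 0 = x ∧ v n = y ∧
      ∀ i < n, e i ∈ F ∧ v i ∈ e i ∧ v (i + 1) ∈ e i := by
  classical
  obtain ⟨w⟩ := h
  set p := w.toPath.1
  have hinj {i j : ℕ} (hi : i ≤ p.length) (hj : j ≤ p.length)
      (hij : p.getVert i = p.getVert j) : i = j :=
    w.toPath.2.getVert_injOn hi hj hij
  obtain ⟨n, hn⟩ : Even p.length := by
    simpa [p.getVert_length] using incidenceGraph.isLeft_getVert_iff p le_rfl
  have hn1 : 1 ≤ n := by
    by_contra! h0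
    exact hxy (Sum.inl_injective (p.eq_of_length_eq_zero (by omega)))
  let vert k := (p.getVert (2 * k)).elim id fun _ => 0
  let edge k := (p.getVert (2 * k + 1)).elim (fun _ => ∅) id
  have hvert k (hk : k ≤ n) : p.getVert (2 * k) = .inl (vert k) := by
    obtain ⟨a, ha⟩ :=
      Sum.isLeft_iff.1 ((incidenceGraph.isLeft_getVert_iff p (by omega)).2 (even_two_mul k))
    simp [vert, ha]
  have hedge k (hk : k < n) : p.getVert (2 * k + 1) = .inr (edge k) := by
    have := (incidenceGraph.isLeft_getVert_iff p (k := 2 * k + 1) (by omega)).not.2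
      (Nat.not_even_iff_odd.2 (odd_two_mul_add_one k))
    obtain ⟨a, ha⟩ := Sum.isRight_iff.1 (Sum.not_isLeft.1 this)
    simp [edge, ha]
  refine ⟨n, hn1, vert, edge, fun i hi j hj hij => ?_, fun i hi j hj hij => ?_, ?_, ?_,
    fun k hk => ?_⟩
  · rw [Set.mem_Iic] at hi hj
    have := hinj (i := 2 * i) (j := 2 * j) (by omega) (by omega)
      (by rw [hvert i hi, hvert j hj, hij])
    omega
  · rw [Set.mem_Iio] at hi hj
    have := hinj (i := 2 * i + 1) (j := 2 * j + 1) (by omega) (by omega)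
      (by rw [hedge i hi, hedge j hj, hij])
    omega
  · simp [vert, p.getVert_zero]
  · have : p.getVert (2 * n) = .inl y := by rw [two_mul, ← hn, p.getVert_length]
    simp [vert, this]
  · have h1 := p.adj_getVert_succ (i := 2 * k) (by omega)
    have h2 := p.adj_getVert_succ (i := 2 * k + 1) (by omega)
    rw [hvert k hk.le, hedge k hk] at h1
    rw [hedge k hk, show 2 * k + 1 + 1 = 2 * (k + 1) by ring, hvert (k + 1) hk] at h2
    exact ⟨h1.1, h1.2, h2.2⟩

lemma hasBergeCycle_of_not_bergeAcyclic (h : ¬ BergeAcyclic F) : HasBergeCycle ↑F := by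
  simp only [BergeAcyclic, Set.Pairwise, not_forall, not_not, exists_prop, mem_coe] at h
  obtain ⟨e₀, he₀, x, hx, y, hy, hxy, hlink⟩ := h
  obtain ⟨n, hn, v, e, hv, he, rfl, rfl, hpath⟩ := hlink.exists_bergePath hxy
  have hne k (hk : k < n) : e k ≠ e₀ := (mem_erase.1 (hpath k hk).1).1
  refine hasBergeCycle_of_closed_path hn (e := fun k => if k < n then e k else e₀) hv
    (fun i hi j hj hij => ?_) (fun i hi => ?_) (fun i hi => by simpa [hi] using (hpath i hi).2)
    (by simpa using hy) (by simpa using hx)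
  · rw [Set.mem_Iic] at hi hj
    rcases hi.lt_or_eq with hi | rfl <;> rcases hj.lt_or_eq with hj | rfl <;>
      simp only [hi, hj, if_true, if_false, lt_irrefl] at hij
    · exact he hi hj hij
    · exact (hne i hi hij).elim
    · exact (hne j hj hij.symm).elim
    · rfl
  · rcases hi.lt_or_eq with hi | rfl
    · simpa [hi] using mem_of_mem_erase (hpath i hi).1
    · simpa using he₀

lemma HasBergeCycle.exists_card_biUnion_le {S : Set (Finset ℕ)} (h3 : ∀ s ∈ S, s.card ≤ 3)
    (h : HasBergeCycle S) :
    ∃ G : Finset (Finset ℕ), ↑G ⊆ S ∧ G.Nonempty ∧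
      (G.biUnion id).card ≤ 2 * G.card := by
  obtain ⟨t, ht, v, e, hv, he, hmem⟩ := h
  have : NeZero t := ⟨by omega⟩
  have : Nontrivial (ZMod t) := ZMod.nontrivial_iff.2 (by omega)
  refine ⟨univ.image e, by simpa [Set.range_subset_iff] using fun i => (hmem i).1,
    univ_nonempty.image e, ?_⟩
  -- `v i` also lies in `e (i - 1)`, so removing it from `e i` loses no vertex of the cycle
  have hcover : (univ.image e).biUnion id ⊆ univ.biUnion fun i => (e i).erase (v i) := by
    intro x hx
    obtain ⟨_, hs, hxs⟩ := mem_biUnion.1 hx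
    obtain ⟨i, -, rfl⟩ := mem_image.1 hs
    by_cases hxi : x = v i
    · subst hxi
      refine mem_biUnion.2 ⟨i - 1, mem_univ _, mem_erase.2 ⟨hv.ne ?_, ?_⟩⟩
      · exact (pred_ne_self i).symm
      · simpa using (hmem (i - 1)).2.2
    · exact mem_biUnion.2 ⟨i, mem_univ _, mem_erase.2 ⟨hxi, hxs⟩⟩
  calc ((univ.image e).biUnion id).card
      ≤ ∑ i, ((e i).erase (v i)).card := (card_le_card hcover).trans card_biUnion_le
    _ ≤ ∑ _i : ZMod t, 2 := sum_le_sum fun i _ => by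
        rw [card_erase_of_mem (hmem i).2.1]; have := h3 _ (hmem i).1; omega
    _ = 2 * (univ.image e).card := by
        rw [sum_const, card_image_of_injective _ he, smul_eq_mul, mul_comm]

lemma hasBergeCycle_of_card_biUnion_le (h3 : ∀ e ∈ F, 3 ≤ e.card) (hne : F.Nonempty)
    (hcard : (F.biUnion id).card ≤ 2 * F.card) : HasBergeCycle ↑F := by
  by_contra h
  exact ((not_imp_comm.1 hasBergeCycle_of_not_bergeAcyclic h).two_mul_card_lt_card_biUnion
    h3 hne).not_ge hcard

lemma HasBergeCycle.mono {S S' : Set (Finset ℕ)} (h : HasBergeCycle S) (hS : S ⊆ S') :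
    HasBergeCycle S' := by
  obtain ⟨t, ht, v, e, hv, he, hmem⟩ := h
  exact ⟨t, ht, v, e, hv, he, fun i => ⟨hS (hmem i).1, (hmem i).2⟩⟩

theorem hasBergeCycle_coe_iff (h3 : ∀ e ∈ F, e.card = 3) :
    HasBergeCycle ↑F ↔ ∃ G ⊆ F, G.Nonempty ∧ (G.biUnion id).card ≤ 2 * G.card := by
  refine ⟨fun h => ?_, fun ⟨G, hGF, hne, hcard⟩ => ?_⟩
  · obtain ⟨G, hGF, hne, hcard⟩ := h.exists_card_biUnion_le fun s hs => (h3 s hs).le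
    exact ⟨G, coe_subset.1 hGF, hne, hcard⟩
  · exact (hasBergeCycle_of_card_biUnion_le (fun e he => (h3 e (hGF he)).ge) hne hcard).mono
      (coe_subset.2 hGF)

end BergeCycle

lemma Finset.powersetCard_two_triple {α : Type*} [DecidableEq α] {u v w : α} (huv : u ≠ v)
    (hvw : v ≠ w) (huw : u ≠ w) :
    ({u, v, w} : Finset α).powersetCard 2 = {{u, w}, {v, w}, {u, v}} := by
  simp [powersetCard_succ_insert, huv, hvw, huw, powersetCard_one,
    powersetCard_eq_empty.2 (by simp : #{w} < 2)]

lemma Finset.image_powersetCard_two_triple {α β : Type*} [DecidableEq α] [DecidableEq β]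
    (f : Finset α → β) {u v w : α} (huv : u ≠ v) (hvw : v ≠ w) (huw : u ≠ w) :
    (({u, v, w} : Finset α).powersetCard 2).image f = {f {u, v}, f {v, w}, f {u, w}} := by
  ext
  simp only [powersetCard_two_triple huv hvw huw, image_insert, image_singleton, mem_insert,
    mem_singleton]
  tauto

lemma exists_ordered_triple {ord : ℕ → ℕ} {e : Finset ℕ} (he : e.card = 3)
    (hinj : Set.InjOn ord ↑e) : ∃ u v w, e = {u, v, w} ∧ ord u < ord v ∧ ord v < ord w := by
  obtain ⟨a, b, c, hab, hac, hbc, rfl⟩ := card_eq_three.1 he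
  have hne {x y : ℕ} (hx : x ∈ ({a, b, c} : Finset ℕ)) (hy : y ∈ ({a, b, c} : Finset ℕ))
      (hxy : x ≠ y) : ord x ≠ ord y := fun h => hxy (hinj hx hy h)
  have hab' := hne (by simp) (by simp) hab
  have hac' := hne (by simp) (by simp) hac
  have hbc' := hne (by simp) (by simp) hbc
  rcases hab'.lt_or_gt with h1 | h1 <;> rcases hac'.lt_or_gt with h2 | h2 <;>
    rcases hbc'.lt_or_gt with h3 | h3
  all_goals first
    | exact ⟨a, b, c, rfl, by omega, by omega⟩
    | exact ⟨a, c, b, by rw [pair_comm], by omega, by omega⟩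
    | exact ⟨b, a, c, by rw [insert_comm], by omega, by omega⟩
    | exact ⟨b, c, a, by ext; simp only [mem_insert, mem_singleton]; tauto, by omega, by omega⟩
    | exact ⟨c, a, b, by ext; simp only [mem_insert, mem_singleton]; tauto, by omega, by omega⟩
    | exact ⟨c, b, a, by ext; simp only [mem_insert, mem_singleton]; tauto, by omega, by omega⟩

-- the vertex set of the image of an edge `e` is the image of the pairs of `e`, in any order
def imageFamily (f : Finset ℕ → ℕ) (E' : Finset (Finset ℕ)) : Finset (Finset ℕ) :=
  E'.image fun e => (e.powersetCard 2).image f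

section PairHom

variable {H : ThreeGraph} {ord : ℕ → ℕ} {E : Set (ℕ × ℕ × ℕ)} {f : Finset ℕ → ℕ}
  {E' : Finset (Finset ℕ)}

lemma imageVerts_eq_card_biUnion : imageVerts f E' = ((imageFamily f E').biUnion id).card := by
  rw [imageVerts, shadowOf, imageFamily, image_biUnion, biUnion_image]
  rfl

lemma imageVerts_pos (hE' : E' ⊆ H.edges) (hne : E'.Nonempty) : 0 < imageVerts f E' := by
  obtain ⟨e, he⟩ := hne
  obtain ⟨s, hs⟩ := powersetCard_nonempty.2 (by rw [H.card_eq e (hE' he)]; omega : 2 ≤ e.card)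
  exact card_pos.2 ⟨f s, mem_image_of_mem f (mem_biUnion.2 ⟨e, he, hs⟩)⟩

lemma mem_imageFamily_iff (hinj : Set.InjOn ord ↑H.verts) (hE' : E' ⊆ H.edges)
    {s : Finset ℕ} :
    s ∈ imageFamily f E' ↔ ∃ e ∈ E', ∃ u v w : ℕ, e = ({u, v, w} : Finset ℕ) ∧
      ord u < ord v ∧ ord v < ord w ∧ s = ({f {u, v}, f {v, w}, f {u, w}} : Finset ℕ) := by
  have himage {u v w : ℕ} (huv : ord u < ord v) (hvw : ord v < ord w) :=
    image_powersetCard_two_triple f (ne_of_apply_ne ord huv.ne) (ne_of_apply_ne ord hvw.ne)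
      (ne_of_apply_ne ord (huv.trans hvw).ne)
  constructor
  · rintro hs
    obtain ⟨e, he, rfl⟩ := mem_image.1 hs
    obtain ⟨u, v, w, rfl, huv, hvw⟩ := exists_ordered_triple (H.card_eq e (hE' he))
      (hinj.mono (coe_subset.2 (H.subset_verts e (hE' he))))
    exact ⟨_, he, u, v, w, rfl, huv, hvw, himage huv hvw⟩
  · rintro ⟨e, he, u, v, w, rfl, huv, hvw, rfl⟩
    exact mem_image.2 ⟨_, he, himage huv hvw⟩

lemma card_eq_three_of_mem_imageFamily (hf : IsPairHom H ord E f) (hE' : E' ⊆ H.edges)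
    {s : Finset ℕ} (hs : s ∈ imageFamily f E') : s.card = 3 := by
  obtain ⟨e, he, u, v, w, rfl, huv, hvw, rfl⟩ := (mem_imageFamily_iff hf.1 hE').1 hs
  obtain ⟨⟨h1, h2, h3⟩, -⟩ := hf.2 _ (hE' he) u v w rfl huv hvw
  exact card_eq_three.2 ⟨_, _, _, h1, h3, h2, rfl⟩

lemma Oriented.injOn_toFinset (hE : Oriented E) :
    Set.InjOn (fun p : ℕ × ℕ × ℕ => ({p.1, p.2.1, p.2.2} : Finset ℕ)) E := by
  rintro ⟨a, b, c⟩ habc ⟨a', b', c'⟩ habc' h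
  obtain ⟨-, h1, h2, h3, h4, h5⟩ := hE a b c habc
  obtain ⟨⟨h1', h2', h3'⟩, -⟩ := hE a' b' c' habc'
  have hmem {x : ℕ} (hx : x ∈ ({a', b', c'} : Finset ℕ)) : x = a ∨ x = b ∨ x = c := by
    simpa using (congrArg (x ∈ ·) h).mpr hx
  rcases hmem (x := a') (by simp) with rfl | rfl | rfl <;>
    rcases hmem (x := b') (by simp) with rfl | rfl | rfl <;>
    rcases hmem (x := c') (by simp) with rfl | rfl | rfl <;>
    first | rfl | tauto

lemma imageEdges_eq_card (hE : Oriented E) (hf : IsPairHom H ord E f) (hE' : E' ⊆ H.edges) :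
    imageEdges ord f E' = (imageFamily f E').card := by
  rw [imageEdges, ← (hE.injOn_toFinset.mono ?_).ncard_image, ← Set.ncard_coe_finset]
  · congr 1
    ext s
    rw [mem_coe, mem_imageFamily_iff hf.1 hE']
    constructor
    · rintro ⟨_, ⟨_, he, u, v, w, rfl, huv, hvw, rfl⟩, rfl⟩
      exact ⟨_, he, u, v, w, rfl, huv, hvw, rfl⟩
    · rintro ⟨e, he, u, v, w, rfl, huv, hvw, rfl⟩
      exact ⟨_, ⟨_, he, u, v, w, rfl, huv, hvw, rfl⟩, rfl⟩
  · rintro _ ⟨e, he, u, v, w, rfl, huv, hvw, rfl⟩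
    exact (hf.2 _ (hE' he) u v w rfl huv hvw).2

lemma setOf_eq_coe_imageFamily (hinj : Set.InjOn ord ↑H.verts) :
    {s : Finset ℕ | ∃ e ∈ H.edges, ∃ u v w : ℕ,
      e = ({u, v, w} : Finset ℕ) ∧ ord u < ord v ∧ ord v < ord w ∧
      s = ({f {u, v}, f {v, w}, f {u, w}} : Finset ℕ)} = ↑(imageFamily f H.edges) :=
  Set.ext fun _ => (mem_imageFamily_iff hinj subset_rfl).symm

theorem hasBergeCycle_imageFamily_iff (hE : Oriented E) (hf : IsPairHom H ord E f) :
    HasBergeCycle ↑(imageFamily f H.edges) ↔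
      ∃ E' ⊆ H.edges, E'.Nonempty ∧ imageVerts f E' ≤ 2 * imageEdges ord f E' := by
  rw [hasBergeCycle_coe_iff fun s => card_eq_three_of_mem_imageFamily hf le_rfl]
  constructor
  · rintro ⟨G, hG, hne, hcard⟩
    obtain ⟨E', hE', rfl⟩ := subset_image_iff.1 hG
    refine ⟨E', hE', image_nonempty.1 hne, ?_⟩
    rwa [imageVerts_eq_card_biUnion, imageEdges_eq_card hE hf hE']
  · rintro ⟨E', hE', hne, hcard⟩
    refine ⟨imageFamily f E', image_subset_image hE', hne.image _, ?_⟩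
    rwa [imageVerts_eq_card_biUnion, imageEdges_eq_card hE hf hE'] at hcard

end PairHom

def pairDensities (H : ThreeGraph) (ord : ℕ → ℕ) (f : Finset ℕ → ℕ) : Set ℝ :=
  {r : ℝ | ∃ E' : Finset (Finset ℕ), E' ⊆ H.edges ∧ E'.Nonempty ∧
    r = (imageEdges ord f E' : ℝ) / (imageVerts f E' : ℝ)}

section Density

variable {H : ThreeGraph} {ord : ℕ → ℕ} {f : Finset ℕ → ℕ}

lemma pairDensities_finite : (pairDensities H ord f).Finite :=
  (H.edges.powerset.finite_toSet.image
    fun E' => (imageEdges ord f E' : ℝ) / (imageVerts f E' : ℝ)).subset <| by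
      rintro _ ⟨E', hE', -, rfl⟩
      exact ⟨E', mem_powerset.2 hE', rfl⟩

lemma sSup_pairDensities_nonneg : 0 ≤ sSup (pairDensities H ord f) :=
  Real.sSup_nonneg fun _ ⟨_, _, _, hr⟩ => hr ▸ by positivity

lemma half_le_sSup_pairDensities_iff : 1 / 2 ≤ sSup (pairDensities H ord f) ↔
    ∃ E' ⊆ H.edges, E'.Nonempty ∧ imageVerts f E' ≤ 2 * imageEdges ord f E' := by
  constructor
  · intro h
    by_contra! hsparse
    rcases (pairDensities H ord f).eq_empty_or_nonempty with hempty | hne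
    · rw [hempty, Real.sSup_empty] at h
      norm_num at h
    refine ((pairDensities_finite.csSup_lt_iff hne).2 ?_).not_ge h
    rintro _ ⟨E', hE', hE'ne, rfl⟩
    have hlt : (2 * imageEdges ord f E' : ℝ) < imageVerts f E' := by
      exact_mod_cast hsparse E' hE' hE'ne
    rw [div_lt_iff₀ (by linarith)]
    linarith
  · rintro ⟨E', hE', hne, hdense⟩
    refine le_csSup_of_le pairDensities_finite.bddAbove ⟨E', hE', hne, rfl⟩ ?_
    have hle : (imageVerts f E' : ℝ) ≤ 2 * imageEdges ord f E' := by exact_mod_cast hdense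
    rw [le_div_iff₀ (by exact_mod_cast imageVerts_pos hE' hne)]
    linarith

end Density

-- `f {a, b} = 2 ^ a + 2 ^ b` satisfies `f {u, v} < f {u, w} < f {v, w}` for `u < v < w`
lemma exists_isPairHom (H : ThreeGraph) : ∃ ord E f, Oriented E ∧ IsPairHom H ord E f := by
  refine ⟨id, {p | p.1 < p.2.2 ∧ p.2.2 < p.2.1}, fun s => ∑ i ∈ s, 2 ^ i, ?_,
    Set.injOn_id _, fun e _ u v w _ huv hvw => ?_⟩
  · intro a b c h
    simp only [Set.mem_ofPred_eq] at h ⊢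
    omega
  · have huv : u < v := huv
    have hvw : v < w := hvw
    have h1 : 2 ^ u < 2 ^ v := Nat.pow_lt_pow_right (by norm_num) huv
    have h2 : 2 ^ v < 2 ^ w := Nat.pow_lt_pow_right (by norm_num) hvw
    simp only [sum_pair huv.ne, sum_pair hvw.ne, sum_pair (huv.trans hvw).ne, Set.mem_ofPred_eq]
    omega

lemma half_le_mpair_iff (H : ThreeGraph) : 1 / 2 ≤ mpair H ↔
    ∀ ord E f, Oriented E → IsPairHom H ord E f → 1 / 2 ≤ sSup (pairDensities H ord f) := by
  obtain ⟨ord, E, f, hE, hf⟩ := exists_isPairHom H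
  rw [mpair]
  refine Iff.trans (le_csInf_iff ?_ ⟨_, ord, E, f, hE, hf, rfl⟩) ⟨?_, ?_⟩
  · exact ⟨0, by rintro _ ⟨ord, E, f, -, -, rfl⟩; exact sSup_pairDensities_nonneg⟩
  · intro h ord E f hE hf
    exact h _ ⟨ord, E, f, hE, hf, rfl⟩
  · rintro h _ ⟨ord, E, f, hE, hf, rfl⟩
    exact h ord E f hE hf

theorem avoidable_iff_mpair_ge_half_general (H : ThreeGraph) :
    Avoidable H ↔ mpair H ≥ 1 / 2 := by
  rw [Avoidable, ge_iff_le, half_le_mpair_iff]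
  refine forall_congr' fun ord => forall_congr' fun E => forall_congr' fun f => ?_
  refine forall_congr' fun hE => forall_congr' fun hf => ?_
  rw [setOf_eq_coe_imageFamily hf.1, hasBergeCycle_imageFamily_iff hE hf,
    half_le_sSup_pairDensities_iff]

/-- A nonempty 3-graph `H` is avoidable if and only if `m_pair(H) ≥ 1/2`. -/
theorem avoidable_iff_mpair_ge_half (H : ThreeGraph) (hne : H.edges.Nonempty) :
    Avoidable H ↔ mpair H ≥ 1 / 2 :=
  avoidable_iff_mpair_ge_half_general H
end
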